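/- arXiv:2407.04889 — 9 statements merged into one kernel-verified Lean document; each statement's English description precedes it below -/
import Mathlib

section
/- Fix η > 0, T > 0 and a matrix A ∈ ℝ^{n×m}. For every measurable continuous-time strategy x : [0,T] → Δ_n and every initial history h0 ∈ ℝ^m, the optimizer's continuous-time reward against the Replicator Dynamics admits the closed form R_cont(x, h0, T) = (1/η)·[ ln( Σ_{i=1}^m exp(η·h0_i) ) − ln( Σ_{i=1}^m exp( η·( h0_i − e_i^⊤ A^⊤ ∫_0^T x(s) ds ) ) ) ]. In particular, R_cont(x, h0, T) depends on x only through the vector ∫_0^T x(s) ds. -/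
open MeasureTheory

/-- Componentwise cumulative play of a continuous-time strategy: `∫_0^t x(s) ds`. -/
noncomputable def cumX {n : ℕ} (x : ℝ → Fin n → ℝ) (t : ℝ) (k : Fin n) : ℝ :=
  ∫ s in (0:ℝ)..t, x s k

/-- The Replicator Dynamics learner's mixed strategy at time `t`, with parameter `η`,
initial history `h0`, against the optimizer's strategy `x`, in the zero-sum game with
optimizer matrix `A` (learner matrix `−A`). -/
noncomputable def contPlay {n m : ℕ} (η : ℝ) (A : Matrix (Fin n) (Fin m) ℝ)
    (h0 : Fin m → ℝ) (x : ℝ → Fin n → ℝ) (t : ℝ) (i : Fin m) : ℝ :=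
  Real.exp (η * (h0 i - ∑ k, cumX x t k * A k i)) /
    ∑ j, Real.exp (η * (h0 j - ∑ k, cumX x t k * A k j))

/-- The optimizer's continuous-time reward `∫_0^T x(t)ᵀ A y(t) dt` against the
Replicator Dynamics. -/
noncomputable def Rcont {n m : ℕ} (η : ℝ) (A : Matrix (Fin n) (Fin m) ℝ)
    (h0 : Fin m → ℝ) (T : ℝ) (x : ℝ → Fin n → ℝ) : ℝ :=
  ∫ t in (0:ℝ)..T, ∑ k, ∑ i, x t k * A k i * contPlay η A h0 x t i


/-!
Along the play, `F t = log ∑ⱼ exp (η (h0 j - (Aᵀ ∫₀ᵗ x)ⱼ))` has derivative `-η x(t)ᵀ A y(t)`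
wherever `t ↦ ∫₀ᵗ x` has derivative `x t`, which by the Lebesgue differentiation theorem holds
for almost every `t`. Since `∫₀ᵗ x` is `1`-Lipschitz and the log-partition function is `C¹`,
`F` is Lipschitz, hence absolutely continuous, on `[0, T]`, and the fundamental theorem of
calculus for absolutely continuous functions gives `R_cont = (F 0 - F T) / η`.
-/

open Set

noncomputable def logPartition {n m : ℕ} (η : ℝ) (A : Matrix (Fin n) (Fin m) ℝ)
    (h0 : Fin m → ℝ) (c : Fin n → ℝ) : ℝ :=
  Real.log (∑ j, Real.exp (η * (h0 j - ∑ k, c k * A k j)))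

section

variable {n m : ℕ} {η T : ℝ} {A : Matrix (Fin n) (Fin m) ℝ} {h0 : Fin m → ℝ}
  {x : ℝ → Fin n → ℝ} {C : NNReal}

lemma partition_pos (hm : 0 < m) (c : Fin n → ℝ) :
    0 < ∑ j, Real.exp (η * (h0 j - ∑ k, c k * A k j)) :=
  haveI : Nonempty (Fin m) := ⟨⟨0, hm⟩⟩
  Finset.sum_pos (fun _ _ => Real.exp_pos _) Finset.univ_nonempty

lemma contDiff_logPartition (hm : 0 < m) : ContDiff ℝ 1 (logPartition η A h0) :=
  ContDiff.log (by fun_prop) fun c => (partition_pos hm c).ne'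

lemma hasDerivAt_logPartition_cumX (hm : 0 < m) {t : ℝ}
    (hx : ∀ k, HasDerivAt (fun u => cumX x u k) (x t k) t) :
    HasDerivAt (fun u => logPartition η A h0 (cumX x u))
      (-η * ∑ k, ∑ i, x t k * A k i * contPlay η A h0 x t i) t := by
  have hZ := HasDerivAt.fun_sum fun j (_ : j ∈ Finset.univ) =>
    (((HasDerivAt.fun_sum fun k (_ : k ∈ Finset.univ) =>
      (hx k).mul_const (A k j)).const_sub (h0 j)).const_mul η).exp
  refine (hZ.log (partition_pos hm _).ne').congr_deriv ?_
  rw [Finset.sum_comm, Finset.mul_sum, Finset.sum_div]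
  refine Finset.sum_congr rfl fun i _ => ?_
  rw [← Finset.sum_mul, contPlay]
  ring

lemma intervalIntegrable_apply (hmeas : Measurable x) (hx : ∀ t ∈ Icc 0 T, ‖x t‖ ≤ C)
    {a b : ℝ} (ha : a ∈ Icc 0 T) (hb : b ∈ Icc 0 T) (k : Fin n) :
    IntervalIntegrable (fun s => x s k) volume a b :=
  intervalIntegrable_const.mono_fun' (measurable_pi_apply k |>.comp hmeas).aestronglyMeasurable
    (ae_restrict_of_forall_mem measurableSet_uIoc fun s hs =>
      (norm_le_pi_norm (x s) k).trans (hx s (uIcc_subset_Icc ha hb (uIoc_subset_uIcc hs))))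

lemma lipschitzOnWith_cumX (hmeas : Measurable x) (hx : ∀ t ∈ Icc 0 T, ‖x t‖ ≤ C) :
    LipschitzOnWith C (cumX x) (Icc 0 T) := by
  refine LipschitzOnWith.of_dist_le_mul fun s hs t ht =>
    (dist_pi_le_iff (by positivity)).2 fun k => ?_
  have h0 : (0 : ℝ) ∈ Icc 0 T := ⟨le_rfl, hs.1.trans hs.2⟩
  rw [Real.dist_eq, cumX, cumX, intervalIntegral.integral_interval_sub_left
    (intervalIntegrable_apply hmeas hx h0 hs k) (intervalIntegrable_apply hmeas hx h0 ht k),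
    ← Real.norm_eq_abs]
  exact intervalIntegral.norm_integral_le_of_norm_le_const fun u hu =>
    (norm_le_pi_norm (x u) k).trans (hx u (uIcc_subset_Icc ht hs (uIoc_subset_uIcc hu)))

lemma ae_hasDerivAt_cumX (hmeas : Measurable x) (hx : ∀ t ∈ Icc 0 T, ‖x t‖ ≤ C) (hT : 0 ≤ T) :
    ∀ᵐ t, t ∈ Icc 0 T → ∀ k, HasDerivAt (fun u => cumX x u k) (x t k) t := by
  have hT' : T ∈ Icc 0 T := ⟨hT, le_rfl⟩
  have h0 : (0 : ℝ) ∈ Icc 0 T := ⟨le_rfl, hT⟩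
  have := ae_all_iff.2 fun k =>
    (intervalIntegrable_apply hmeas hx h0 hT' k).ae_hasDerivAt_integral
  filter_upwards [this] with t ht hmem k
  exact ht k (Icc_subset_uIcc hmem) 0 left_mem_uIcc

lemma cumX_zero : cumX x 0 = 0 :=
  funext fun _ => intervalIntegral.integral_same

lemma Rcont_eq_logPartition_sub (hm : 0 < m) (hη : η ≠ 0) (hT : 0 ≤ T) (hmeas : Measurable x)
    (hx : ∀ t ∈ Icc 0 T, x t ∈ stdSimplex ℝ (Fin n)) :
    Rcont η A h0 T x = (1 / η) * (logPartition η A h0 0 - logPartition η A h0 (cumX x T)) := by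
  have hx1 : ∀ t ∈ Icc 0 T, ‖x t‖ ≤ (1 : NNReal) := fun t ht => by
    simpa using stdSimplex_subset_closedBall (hx t ht)
  set F := fun u => logPartition η A h0 (cumX x u)
  have hc := lipschitzOnWith_cumX hmeas hx1
  obtain ⟨K, hK⟩ := (contDiff_logPartition hm).locallyLipschitz.locallyLipschitzOn
    |>.exists_lipschitzOnWith_of_compact (isCompact_Icc.image_of_continuousOn hc.continuousOn)
  have hF : AbsolutelyContinuousOnInterval F 0 T := by
    refine LipschitzOnWith.absolutelyContinuousOnInterval (K := K * 1) ?_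
    rw [uIcc_of_le hT]
    exact hK.comp hc (mapsTo_image _ _)
  have hderiv : ∀ᵐ t, t ∈ uIoc 0 T →
      ∑ k, ∑ i, x t k * A k i * contPlay η A h0 x t i = -(1 / η) * deriv F t := by
    filter_upwards [ae_hasDerivAt_cumX hmeas hx1 hT] with t ht hmem
    have hmem' : t ∈ Icc 0 T := Ioc_subset_Icc_self (uIoc_of_le hT ▸ hmem)
    rw [(hasDerivAt_logPartition_cumX hm (ht hmem')).deriv]
    field_simp
  calc Rcont η A h0 T x = ∫ t in 0..T, -(1 / η) * deriv F t :=
        intervalIntegral.integral_congr_ae hderiv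
    _ = _ := by
      rw [intervalIntegral.integral_const_mul, hF.integral_deriv_eq_sub]
      simp only [F, cumX_zero]
      ring

end

theorem stmt0_general {n m : ℕ} (hm : 0 < m) (η T : ℝ) (hη : 0 < η) (hT : 0 < T)
    (A : Matrix (Fin n) (Fin m) ℝ) (h0 : Fin m → ℝ) (x : ℝ → Fin n → ℝ)
    (hmeas : Measurable x) (hx : ∀ t ∈ Set.Icc (0:ℝ) T, x t ∈ stdSimplex ℝ (Fin n)) :
    Rcont η A h0 T x =
      (1/η) * (Real.log (∑ i, Real.exp (η * h0 i)) -
        Real.log (∑ i, Real.exp (η * (h0 i - ∑ k, cumX x T k * A k i)))) ∧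
    ∀ x' : ℝ → Fin n → ℝ, Measurable x' →
      (∀ t ∈ Set.Icc (0:ℝ) T, x' t ∈ stdSimplex ℝ (Fin n)) →
      (∀ k, cumX x' T k = cumX x T k) →
      Rcont η A h0 T x' = Rcont η A h0 T x := by
  have closed_form := fun (y : ℝ → Fin n → ℝ) => Rcont_eq_logPartition_sub (A := A) (h0 := h0)
    (x := y) hm hη.ne' hT.le
  refine ⟨?_, fun x' hmeas' hx' hcum => ?_⟩
  · simp [closed_form x hmeas hx, logPartition]
  · rw [closed_form x' hmeas' hx', closed_form x hmeas hx, funext hcum]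

/-- closed form of the continuous-time reward, and the fact that it only
depends on the strategy through `∫_0^T x(s) ds`. -/
theorem stmt0 {n m : ℕ} (hn : 0 < n) (hm : 0 < m) (η T : ℝ) (hη : 0 < η) (hT : 0 < T)
    (A : Matrix (Fin n) (Fin m) ℝ) (h0 : Fin m → ℝ) (x : ℝ → Fin n → ℝ)
    (hmeas : Measurable x) (hx : ∀ t ∈ Set.Icc (0:ℝ) T, x t ∈ stdSimplex ℝ (Fin n)) :
    Rcont η A h0 T x =
      (1/η) * (Real.log (∑ i, Real.exp (η * h0 i)) -
        Real.log (∑ i, Real.exp (η * (h0 i - ∑ k, cumX x T k * A k i)))) ∧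
    ∀ x' : ℝ → Fin n → ℝ, Measurable x' →
      (∀ t ∈ Set.Icc (0:ℝ) T, x' t ∈ stdSimplex ℝ (Fin n)) →
      (∀ k, cumX x' T k = cumX x T k) →
      Rcont η A h0 T x' = Rcont η A h0 T x :=
  stmt0_general hm η T hη hT A h0 x hmeas hx
end

section
/- Fix η > 0, T > 0 and A ∈ ℝ^{n×m}. With zero initial history h0 = 0, the optimizer's optimal continuous-time reward against the Replicator Dynamics satisfies T·Val(A) ≤ R*_cont(0, T) ≤ T·Val(A) + ln(m)/η, where Val(A) = max_{x ∈ Δ_n} min_{j ∈ [m]} x^⊤ A e_j. -/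
open MeasureTheory

/-- The optimal continuous-time reward: supremum over all measurable strategies taking
values in the simplex on `[0,T]`. -/
noncomputable def RcontStar {n m : ℕ} (η : ℝ) (A : Matrix (Fin n) (Fin m) ℝ)
    (h0 : Fin m → ℝ) (T : ℝ) : ℝ :=
  sSup {r | ∃ x : ℝ → Fin n → ℝ, Measurable x ∧
    (∀ t ∈ Set.Icc (0:ℝ) T, x t ∈ stdSimplex ℝ (Fin n)) ∧ r = Rcont η A h0 T x}

/-- The value of the zero-sum game for the optimizer:
`Val(A) = max_{x ∈ Δ_n} min_{j} xᵀ A e_j`. -/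
noncomputable def gameValue {n m : ℕ} (A : Matrix (Fin n) (Fin m) ℝ) : ℝ :=
  sSup {v | ∃ x ∈ stdSimplex ℝ (Fin n), v = ⨅ j, ∑ k, x k * A k j}

/-!
Write `L(t) = Aᵀ ∫₀ᵗ x` for the learner's cumulative losses and
`Φ(t) = η⁻¹ log ∑ⱼ exp (η (h0 j - Lⱼ(t)))` for the log-partition potential. Along a strategy
with values in the simplex, `L` is Lipschitz and log-sum-exp is 1-Lipschitz for the sup norm, so
`Φ` is absolutely continuous; at almost every time `L' = Aᵀ x` (Lebesgue differentiation) and,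
the learner's play being the softmax of the exponents, `Φ'` is minus the instantaneous reward.
The fundamental theorem of calculus for absolutely continuous functions therefore gives
`R_cont(x) = Φ(0) - Φ(T)`. For `h0 = 0` this is `log m / η - Φ(T)`, and `Φ(T)` lies between
`-minⱼ Lⱼ(T)` and `-minⱼ Lⱼ(T) + log m / η`. Now `L(T) = T Aᵀ q` for the average play `q ∈ Δₙ`,
which gives the upper bound, and for the constant strategy `q` the lower bound reads
`R_cont ≥ T minⱼ (Aᵀ q)ⱼ`.
-/

open Set

namespace ReplicatorDynamics

section LogSumExp

variable {ι : Type*} [Fintype ι] [Nonempty ι] {b c : ι → ℝ} {ε : ℝ}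

theorem sum_exp_pos (b : ι → ℝ) : 0 < ∑ j, Real.exp (b j) :=
  Finset.sum_pos (fun _ _ => Real.exp_pos _) Finset.univ_nonempty

theorem log_sum_exp_le_add (h : ∀ j, b j ≤ c j + ε) :
    Real.log (∑ j, Real.exp (b j)) ≤ Real.log (∑ j, Real.exp (c j)) + ε := by
  calc Real.log (∑ j, Real.exp (b j)) ≤ Real.log (Real.exp ε * ∑ j, Real.exp (c j)) := by
        refine Real.log_le_log (sum_exp_pos b) ?_
        rw [Finset.mul_sum]
        gcongr with j
        rw [← Real.exp_add]
        exact Real.exp_le_exp.2 (by linarith [h j])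
    _ = Real.log (∑ j, Real.exp (c j)) + ε := by
        rw [Real.log_mul (Real.exp_pos _).ne' (sum_exp_pos c).ne', Real.log_exp, add_comm]

theorem abs_log_sum_exp_sub_le (h : ∀ j, |b j - c j| ≤ ε) :
    |Real.log (∑ j, Real.exp (b j)) - Real.log (∑ j, Real.exp (c j))| ≤ ε := by
  have hbc := log_sum_exp_le_add (b := b) (c := c) fun j => by
    linarith [(abs_sub_le_iff.1 (h j)).1]
  have hcb := log_sum_exp_le_add (b := c) (c := b) fun j => by
    linarith [(abs_sub_le_iff.1 (h j)).2]
  exact abs_sub_le_iff.2 ⟨by linarith, by linarith⟩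

theorem le_log_sum_exp (j : ι) : b j ≤ Real.log (∑ i, Real.exp (b i)) :=
  (Real.le_log_iff_exp_le (sum_exp_pos b)).2
    (Finset.single_le_sum (fun _ _ => (Real.exp_pos _).le) (Finset.mem_univ j))

theorem log_sum_exp_le_log_card_add (h : ∀ j, b j ≤ ε) :
    Real.log (∑ j, Real.exp (b j)) ≤ Real.log (Fintype.card ι) + ε := by
  simpa using log_sum_exp_le_add (c := 0) (by simpa using h)

end LogSumExp

theorem abs_sum_mul_le_of_mem_stdSimplex {ι : Type*} [Fintype ι] {q a : ι → ℝ} {C : ℝ}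
    (hq : q ∈ stdSimplex ℝ ι) (ha : ∀ k, |a k| ≤ C) : |∑ k, q k * a k| ≤ C :=
  calc |∑ k, q k * a k| ≤ ∑ k, |q k * a k| := Finset.abs_sum_le_sum_abs _ _
    _ ≤ ∑ k, q k * C := by
        gcongr with k
        rw [abs_mul, abs_of_nonneg (hq.1 k)]
        exact mul_le_mul_of_nonneg_left (ha k) (hq.1 k)
    _ = C := by rw [← Finset.sum_mul, hq.2, one_mul]

variable {n m : ℕ} {T η : ℝ} {A : Matrix (Fin n) (Fin m) ℝ} {h0 : Fin m → ℝ}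
  {x : ℝ → Fin n → ℝ}

theorem exists_forall_abs_apply_le (A : Matrix (Fin n) (Fin m) ℝ) : ∃ C, ∀ k j, |A k j| ≤ C := by
  obtain ⟨C, hC⟩ := (Set.finite_range fun p : Fin n × Fin m => |A p.1 p.2|).bddAbove
  exact ⟨C, fun k j => hC ⟨(k, j), rfl⟩⟩

theorem integrableOn_apply (hx : Measurable x)
    (hxs : ∀ t ∈ Icc 0 T, x t ∈ stdSimplex ℝ (Fin n)) (k : Fin n) :
    IntegrableOn (fun s => x s k) (Icc 0 T) :=
  Measure.integrableOn_of_bounded (M := 1) measure_Icc_lt_top.ne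
    ((measurable_pi_apply k).comp hx).aestronglyMeasurable
    (ae_restrict_of_forall_mem measurableSet_Icc fun t ht => by
      obtain ⟨hnonneg, hle⟩ := mem_Icc_of_mem_stdSimplex (hxs t ht) k
      rwa [Real.norm_eq_abs, abs_of_nonneg hnonneg])

theorem intervalIntegrable_apply (hx : Measurable x)
    (hxs : ∀ t ∈ Icc 0 T, x t ∈ stdSimplex ℝ (Fin n)) {a b : ℝ} (ha : a ∈ Icc 0 T)
    (hb : b ∈ Icc 0 T) (k : Fin n) : IntervalIntegrable (fun s => x s k) volume a b :=
  ((integrableOn_apply hx hxs k).mono_set (uIcc_subset_Icc ha hb)).intervalIntegrable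

theorem ae_hasDerivAt_cumX (hx : Measurable x)
    (hxs : ∀ t ∈ Icc 0 T, x t ∈ stdSimplex ℝ (Fin n)) (hT : 0 ≤ T) :
    ∀ᵐ t, t ∈ uIcc 0 T → ∀ k, HasDerivAt (fun s => cumX x s k) (x t k) t := by
  have hT' : T ∈ Icc 0 T := ⟨hT, le_rfl⟩
  have h := fun k =>
    (intervalIntegrable_apply hx hxs (left_mem_Icc.2 hT) hT' k).ae_hasDerivAt_integral
  filter_upwards [ae_all_iff.2 h] with t ht htT k
  exact ht k htT 0 left_mem_uIcc

theorem abs_cumLoss_sub_le (hx : Measurable x)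
    (hxs : ∀ t ∈ Icc 0 T, x t ∈ stdSimplex ℝ (Fin n)) {C : ℝ} (hC : ∀ k j, |A k j| ≤ C)
    {t u : ℝ} (ht : t ∈ Icc 0 T) (hu : u ∈ Icc 0 T) (j : Fin m) :
    |∑ k, cumX x t k * A k j - ∑ k, cumX x u k * A k j| ≤ C * |t - u| := by
  have hzero : (0 : ℝ) ∈ Icc 0 T := ⟨le_rfl, ht.1.trans ht.2⟩
  have hdiff : ∑ k, cumX x t k * A k j - ∑ k, cumX x u k * A k j
      = ∫ s in u..t, ∑ k, x s k * A k j := by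
    rw [intervalIntegral.integral_finsetSum
      fun k _ => (intervalIntegrable_apply hx hxs hu ht k).mul_const _, ← Finset.sum_sub_distrib]
    refine Finset.sum_congr rfl fun k _ => ?_
    rw [intervalIntegral.integral_mul_const, ← sub_mul, cumX, cumX,
      intervalIntegral.integral_interval_sub_left (intervalIntegrable_apply hx hxs hzero ht k)
        (intervalIntegrable_apply hx hxs hzero hu k)]
  rw [hdiff, ← Real.norm_eq_abs]
  refine intervalIntegral.norm_integral_le_of_norm_le_const fun s hs => ?_
  have hs' : s ∈ Icc 0 T := uIcc_subset_Icc hu ht (uIoc_subset_uIcc hs)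
  exact abs_sum_mul_le_of_mem_stdSimplex (hxs s hs') fun k => hC k j

noncomputable def potential (η : ℝ) (A : Matrix (Fin n) (Fin m) ℝ) (h0 : Fin m → ℝ)
    (x : ℝ → Fin n → ℝ) (t : ℝ) : ℝ :=
  Real.log (∑ j, Real.exp (η * (h0 j - ∑ k, cumX x t k * A k j))) / η

theorem hasDerivAt_potential [NeZero m] (hη : η ≠ 0) {t : ℝ}
    (hX : ∀ k, HasDerivAt (fun s => cumX x s k) (x t k) t) :
    HasDerivAt (potential η A h0 x) (-∑ k, ∑ i, x t k * A k i * contPlay η A h0 x t i) t := by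
  set e : Fin m → ℝ → ℝ := fun j s => Real.exp (η * (h0 j - ∑ k, cumX x s k * A k j))
  have he : ∀ j, HasDerivAt (e j) (e j t * (η * -∑ k, x t k * A k j)) t := fun j => by
    simpa using ((((HasDerivAt.fun_sum fun k _ => (hX k).mul_const (A k j)).const_sub
      (h0 j)).const_mul η).exp)
  have hW : 0 < ∑ j, e j t := sum_exp_pos _
  have hΦ : HasDerivAt (potential η A h0 x)
      ((∑ j, e j t * (η * -∑ k, x t k * A k j)) / (∑ j, e j t) / η) t :=
    ((HasDerivAt.fun_sum fun j _ => he j).log hW.ne').div_const η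
  convert hΦ using 1
  rw [Finset.sum_comm, div_div, eq_div_iff (mul_ne_zero hW.ne' hη), neg_mul, Finset.sum_mul,
    ← Finset.sum_neg_distrib]
  refine Finset.sum_congr rfl fun j _ => ?_
  simp only [contPlay, ← Finset.sum_mul]
  field_simp
  ring

theorem lipschitzOnWith_potential [NeZero m] (hη : η ≠ 0) (hx : Measurable x)
    (hxs : ∀ t ∈ Icc 0 T, x t ∈ stdSimplex ℝ (Fin n)) {C : ℝ} (hC : ∀ k j, |A k j| ≤ C) :
    LipschitzOnWith (Real.toNNReal C) (potential η A h0 x) (Icc 0 T) := by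
  refine LipschitzOnWith.of_dist_le' fun t ht u hu => ?_
  rw [Real.dist_eq, Real.dist_eq, potential, potential, ← sub_div, abs_div,
    div_le_iff₀ (abs_pos.2 hη)]
  refine abs_log_sum_exp_sub_le fun j => ?_
  calc |η * (h0 j - ∑ k, cumX x t k * A k j) - η * (h0 j - ∑ k, cumX x u k * A k j)|
      = |η| * |∑ k, cumX x t k * A k j - ∑ k, cumX x u k * A k j| := by
        rw [← abs_mul, ← abs_neg]; congr 1; ring
    _ ≤ |η| * (C * |t - u|) := by gcongr; exact abs_cumLoss_sub_le hx hxs hC ht hu j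
    _ = C * |t - u| * |η| := mul_comm _ _

theorem Rcont_eq_potential_sub [NeZero m] (hη : η ≠ 0) (hT : 0 ≤ T) (hx : Measurable x)
    (hxs : ∀ t ∈ Icc 0 T, x t ∈ stdSimplex ℝ (Fin n)) :
    Rcont η A h0 T x = potential η A h0 x 0 - potential η A h0 x T := by
  obtain ⟨C, hC⟩ := exists_forall_abs_apply_le A
  have hac : AbsolutelyContinuousOnInterval (potential η A h0 x) 0 T :=
    (uIcc_of_le hT ▸ lipschitzOnWith_potential hη hx hxs hC).absolutelyContinuousOnInterval
  rw [Rcont, ← neg_sub, ← hac.integral_deriv_eq_sub, ← intervalIntegral.integral_neg]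
  refine intervalIntegral.integral_congr_ae ?_
  filter_upwards [ae_hasDerivAt_cumX hx hxs hT] with t hX ht
  rw [(hasDerivAt_potential hη (hX (uIoc_subset_uIcc ht))).deriv, neg_neg]

theorem potential_zero (x : ℝ → Fin n → ℝ) :
    potential η A (fun _ => 0) x 0 = Real.log m / η := by
  simp [potential, cumX]

theorem Rcont_le_cumLoss_add [NeZero m] (hη : 0 < η) (hT : 0 ≤ T) (hx : Measurable x)
    (hxs : ∀ t ∈ Icc 0 T, x t ∈ stdSimplex ℝ (Fin n)) (j : Fin m) :
    Rcont η A (fun _ => 0) T x ≤ ∑ k, cumX x T k * A k j + Real.log m / η := by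
  have h := le_log_sum_exp (b := fun j => η * (0 - ∑ k, cumX x T k * A k j)) j
  rw [Rcont_eq_potential_sub hη.ne' hT hx hxs, potential_zero, potential, sub_eq_add_neg,
    ← neg_div, add_comm]
  gcongr
  rw [div_le_iff₀ hη]
  linarith

theorem le_Rcont_of_forall_le_cumLoss [NeZero m] (hη : 0 < η) (hT : 0 ≤ T) (hx : Measurable x)
    (hxs : ∀ t ∈ Icc 0 T, x t ∈ stdSimplex ℝ (Fin n)) {v : ℝ}
    (hv : ∀ j, v ≤ ∑ k, cumX x T k * A k j) :
    v ≤ Rcont η A (fun _ => 0) T x := by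
  have h := log_sum_exp_le_log_card_add (b := fun j => η * (0 - ∑ k, cumX x T k * A k j))
    (ε := -(η * v)) fun j => by nlinarith [hv j]
  rw [Fintype.card_fin] at h
  rw [Rcont_eq_potential_sub hη.ne' hT hx hxs, potential_zero, potential, le_sub_comm]
  calc _ ≤ (Real.log m + -(η * v)) / η := by gcongr
    _ = Real.log m / η - v := by field_simp; ring

theorem cumX_const (q : Fin n → ℝ) (t : ℝ) (k : Fin n) : cumX (fun _ => q) t k = t * q k := by
  simp [cumX]

theorem cumX_div_mem_stdSimplex (hT : 0 < T) (hx : Measurable x)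
    (hxs : ∀ t ∈ Icc 0 T, x t ∈ stdSimplex ℝ (Fin n)) :
    (fun k => cumX x T k / T) ∈ stdSimplex ℝ (Fin n) := by
  have hTT : T ∈ Icc 0 T := ⟨hT.le, le_rfl⟩
  refine ⟨fun k => div_nonneg ?_ hT.le, ?_⟩
  · exact intervalIntegral.integral_nonneg hT.le fun s hs => (hxs s hs).1 k
  · rw [← Finset.sum_div, div_eq_one_iff_eq hT.ne']
    simp only [cumX]
    rw [← intervalIntegral.integral_finsetSum
      fun k _ => intervalIntegrable_apply hx hxs (left_mem_Icc.2 hT.le) hTT k]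
    rw [intervalIntegral.integral_congr (g := fun _ => (1 : ℝ)) fun s hs =>
      (hxs s (uIcc_of_le hT.le ▸ hs)).2]
    simp

theorem bddAbove_gameValue_set [NeZero m] (A : Matrix (Fin n) (Fin m) ℝ) :
    BddAbove {v | ∃ q ∈ stdSimplex ℝ (Fin n), v = ⨅ j, ∑ k, q k * A k j} := by
  obtain ⟨C, hC⟩ := exists_forall_abs_apply_le A
  refine ⟨C, ?_⟩
  rintro _ ⟨q, hq, rfl⟩
  exact (ciInf_le (Finite.bddBelow_range _) 0).trans
    ((le_abs_self _).trans (abs_sum_mul_le_of_mem_stdSimplex hq fun k => hC k 0))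

theorem Rcont_le_mul_gameValue_add [NeZero m] (hη : 0 < η) (hT : 0 < T) (hx : Measurable x)
    (hxs : ∀ t ∈ Icc 0 T, x t ∈ stdSimplex ℝ (Fin n)) :
    Rcont η A (fun _ => 0) T x ≤ T * gameValue A + Real.log m / η := by
  set q : Fin n → ℝ := fun k => cumX x T k / T
  obtain ⟨j, hj⟩ := exists_eq_ciInf_of_finite (f := fun j => ∑ k, q k * A k j)
  calc Rcont η A (fun _ => 0) T x ≤ ∑ k, cumX x T k * A k j + Real.log m / η :=
        Rcont_le_cumLoss_add hη hT.le hx hxs j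
    _ = T * ∑ k, q k * A k j + Real.log m / η := by
        rw [Finset.mul_sum]
        congr 1
        refine Finset.sum_congr rfl fun k _ => ?_
        simp only [q]; field_simp
    _ ≤ T * gameValue A + Real.log m / η := by
        gcongr
        exact le_csSup (bddAbove_gameValue_set A) ⟨q, cumX_div_mem_stdSimplex hT hx hxs, hj⟩

theorem mul_iInf_le_Rcont_const [NeZero m] (hη : 0 < η) (hT : 0 ≤ T) {q : Fin n → ℝ}
    (hq : q ∈ stdSimplex ℝ (Fin n)) :
    T * ⨅ j, ∑ k, q k * A k j ≤ Rcont η A (fun _ => 0) T (fun _ => q) := by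
  refine le_Rcont_of_forall_le_cumLoss hη hT measurable_const (fun _ _ => hq) fun j => ?_
  simp only [cumX_const, mul_assoc, ← Finset.mul_sum]
  exact mul_le_mul_of_nonneg_left (ciInf_le (Finite.bddBelow_range _) j) hT

end ReplicatorDynamics

open ReplicatorDynamics

/-- `T·Val(A) ≤ R*_cont(0,T) ≤ T·Val(A) + ln(m)/η`. -/
theorem stmt2 {n m : ℕ} (hn : 0 < n) (hm : 0 < m) (η T : ℝ) (hη : 0 < η) (hT : 0 < T)
    (A : Matrix (Fin n) (Fin m) ℝ) :
    T * gameValue A ≤ RcontStar η A (fun _ => 0) T ∧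
    RcontStar η A (fun _ => 0) T ≤ T * gameValue A + Real.log m / η := by
  have : NeZero m := ⟨hm.ne'⟩
  have hvertex : Pi.single ⟨0, hn⟩ 1 ∈ stdSimplex ℝ (Fin n) := single_mem_stdSimplex ℝ _
  have hupper : ∀ r ∈ {r | ∃ x : ℝ → Fin n → ℝ, Measurable x ∧
      (∀ t ∈ Set.Icc (0:ℝ) T, x t ∈ stdSimplex ℝ (Fin n)) ∧ r = Rcont η A (fun _ => 0) T x},
      r ≤ T * gameValue A + Real.log m / η := by
    rintro _ ⟨x, hx, hxs, rfl⟩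
    exact Rcont_le_mul_gameValue_add hη hT hx hxs
  refine ⟨?_, csSup_le ⟨_, _, measurable_const, fun _ _ => hvertex, rfl⟩ hupper⟩
  rw [← le_div_iff₀' hT]
  refine csSup_le ⟨_, _, hvertex, rfl⟩ ?_
  rintro _ ⟨q, hq, rfl⟩
  rw [le_div_iff₀' hT]
  exact (mul_iInf_le_Rcont_const hη hT.le hq).trans
    (le_csSup ⟨_, hupper⟩ ⟨_, measurable_const, fun _ _ => hq, rfl⟩)
end

section
/- Fix η > 0, T > 0 and A ∈ ℝ^{n×m}. For every x ∈ Δ_n and every j ∈ BR(x), the optimal continuous-time reward with zero initial history satisfies R*_cont(0, T) ≥ ln(m)/η + T·x^⊤A e_j − (1/η)·ln( |BR(x)| + Σ_{i ∉ BR(x)} exp( η·T·( x^⊤A e_j − x^⊤A e_i ) ) ). (Note that x^⊤A e_j − x^⊤A e_i < 0 for every i ∉ BR(x).) -/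
/-!
Against the constant strategy `x` the cumulative history is `t • x`, so the learner plays the
Gibbs distribution `exp (-η t cᵢ) / Z(t)` of the costs `c = xᵀA`, and the optimizer's payoff
rate `∑ᵢ cᵢ exp (-η t cᵢ) / Z(t)` is `-(1/η) (log Z)'(t)`. Hence the reward is
`(log Z(0) - log Z(T)) / η` with `Z(0) = m`, and factoring `exp (-η T c_j)` out of `Z(T)` for a
best response `j` gives the stated value. Rewards of admissible strategies are bounded by
`T ∑ |A k i|`, so the supremum dominates this value.
-/

open MeasureTheory

open scoped Classical in
/-- The set of best responses of the learner (with matrix `−A`) to the optimizer's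
mixed strategy `x`: the columns minimizing `xᵀ A e_j`. -/
noncomputable def BRset {n m : ℕ} (A : Matrix (Fin n) (Fin m) ℝ) (x : Fin n → ℝ) :
    Finset (Fin m) :=
  Finset.univ.filter fun j => ∀ i, ∑ k, x k * A k j ≤ ∑ k, x k * A k i

open Real
open scoped Matrix

section Gibbs

variable {ι : Type*} [Fintype ι]

noncomputable def gibbsSum (η : ℝ) (c : ι → ℝ) (t : ℝ) : ℝ :=
  ∑ i, exp (-(η * t * c i))

variable (η : ℝ) (c : ι → ℝ)

lemma gibbsSum_pos [Nonempty ι] (t : ℝ) : 0 < gibbsSum η c t :=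
  Finset.sum_pos (fun _ _ => exp_pos _) Finset.univ_nonempty

lemma gibbsSum_zero : gibbsSum η c 0 = Fintype.card ι := by
  simp [gibbsSum]

lemma hasDerivAt_gibbsSum (t : ℝ) :
    HasDerivAt (gibbsSum η c) (-η * ∑ i, c i * exp (-(η * t * c i))) t := by
  rw [Finset.mul_sum]
  refine HasDerivAt.fun_sum fun i _ => ?_
  exact ((((hasDerivAt_id' t).const_mul η).mul_const (c i)).fun_neg).exp.congr_deriv (by ring)

lemma continuous_gibbsSum : Continuous (gibbsSum η c) := by
  unfold gibbsSum
  fun_prop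

lemma integral_gibbs_mean [Nonempty ι] (hη : η ≠ 0) (a b : ℝ) :
    ∫ t in a..b, (∑ i, c i * exp (-(η * t * c i))) / gibbsSum η c t =
      (log (gibbsSum η c a) - log (gibbsSum η c b)) / η := by
  have hderiv : ∀ t, HasDerivAt (fun s => -log (gibbsSum η c s) / η)
      ((∑ i, c i * exp (-(η * t * c i))) / gibbsSum η c t) t := fun t =>
    (((hasDerivAt_gibbsSum η c t).log (gibbsSum_pos η c t).ne').neg.div_const η).congr_deriv
      (by simp only [neg_mul, neg_div, neg_neg]; rw [mul_div_assoc, mul_div_cancel_left₀ _ hη])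
  have hcont : Continuous fun t => (∑ i, c i * exp (-(η * t * c i))) / gibbsSum η c t :=
    (by fun_prop : Continuous fun t => ∑ i, c i * exp (-(η * t * c i))).div
      (continuous_gibbsSum η c) fun t => (gibbsSum_pos η c t).ne'
  rw [intervalIntegral.integral_eq_sub_of_hasDerivAt (fun t _ => hderiv t)
    (hcont.intervalIntegrable a b)]
  ring

lemma gibbsSum_eq_exp_mul (T : ℝ) (j : ι) :
    gibbsSum η c T = exp (-(η * T * c j)) * ∑ i, exp (η * T * (c j - c i)) := by
  rw [gibbsSum, Finset.mul_sum]
  refine Finset.sum_congr rfl fun i _ => ?_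
  rw [← exp_add]
  ring_nf

lemma sum_exp_mul_sub_eq_card_add [DecidableEq ι] (a : ℝ) (s : Finset ι) (j : ι)
    (hs : ∀ i ∈ s, c i = c j) :
    ∑ i, exp (a * (c j - c i)) = s.card + ∑ i ∈ Finset.univ \ s, exp (a * (c j - c i)) := by
  rw [← Finset.sum_sdiff (Finset.subset_univ s), add_comm,
    Finset.sum_congr rfl fun i hi => by rw [hs i hi, sub_self, mul_zero, exp_zero]]
  simp

end Gibbs

section BestResponse

variable {n m : ℕ} {A : Matrix (Fin n) (Fin m) ℝ} {x : Fin n → ℝ} {i j : Fin m}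

lemma mem_BRset_iff : j ∈ BRset A x ↔ ∀ i, (x ᵥ* A) j ≤ (x ᵥ* A) i := by
  simp [BRset, Matrix.vecMul_apply_eq_sum]

lemma vecMul_eq_of_mem_BRset (hi : i ∈ BRset A x) (hj : j ∈ BRset A x) :
    (x ᵥ* A) i = (x ᵥ* A) j :=
  le_antisymm (mem_BRset_iff.1 hi j) (mem_BRset_iff.1 hj i)

lemma vecMul_lt_of_not_mem_BRset (hj : j ∈ BRset A x) (hi : i ∉ BRset A x) :
    (x ᵥ* A) j < (x ᵥ* A) i := by
  obtain ⟨k, hk⟩ := not_forall.1 (mt mem_BRset_iff.2 hi)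
  exact (mem_BRset_iff.1 hj k).trans_lt (not_le.1 hk)

end BestResponse

section Rewards

variable {n m : ℕ} (η : ℝ) (A : Matrix (Fin n) (Fin m) ℝ)

lemma cumX_const (x : Fin n → ℝ) (t : ℝ) (k : Fin n) : cumX (fun _ => x) t k = t * x k := by
  simp [cumX]

lemma contPlay_const (x : Fin n → ℝ) (t : ℝ) (i : Fin m) :
    contPlay η A (fun _ => 0) (fun _ => x) t i =
      exp (-(η * t * (x ᵥ* A) i)) / gibbsSum η (x ᵥ* A) t := by
  have hcum : ∀ i,
      η * (0 - ∑ k, cumX (fun _ => x) t k * A k i) = -(η * t * (x ᵥ* A) i) := by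
    intro i
    rw [zero_sub, mul_neg, neg_inj, Matrix.vecMul_apply_eq_sum, Finset.mul_sum, Finset.mul_sum]
    exact Finset.sum_congr rfl fun k _ => by rw [cumX_const]; ring
  simp only [contPlay, hcum, gibbsSum]

lemma Rcont_const (hη : η ≠ 0) [NeZero m] (x : Fin n → ℝ) (T : ℝ) :
    Rcont η A (fun _ => 0) T (fun _ => x) = (log m - log (gibbsSum η (x ᵥ* A) T)) / η := by
  have hrate : ∀ t, ∑ k, ∑ i, x k * A k i * contPlay η A (fun _ => 0) (fun _ => x) t i =
      (∑ i, (x ᵥ* A) i * exp (-(η * t * (x ᵥ* A) i))) / gibbsSum η (x ᵥ* A) t := by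
    intro t
    simp only [contPlay_const, Finset.sum_div, Matrix.vecMul_apply_eq_sum, Finset.sum_mul]
    rw [Finset.sum_comm]
    exact Finset.sum_congr rfl fun i _ => Finset.sum_congr rfl fun k _ => by ring
  simp only [Rcont, hrate, integral_gibbs_mean η _ hη, gibbsSum_zero, Fintype.card_fin]

lemma Rcont_const_eq (hη : η ≠ 0) (x : Fin n → ℝ) (T : ℝ) (j : Fin m) :
    Rcont η A (fun _ => 0) T (fun _ => x) =
      log m / η + T * (x ᵥ* A) j -
        1 / η * log (∑ i, exp (η * T * ((x ᵥ* A) j - (x ᵥ* A) i))) := by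
  have : NeZero m := ⟨j.pos.ne'⟩
  have hQ : 0 < ∑ i, exp (η * T * ((x ᵥ* A) j - (x ᵥ* A) i)) :=
    Finset.sum_pos (fun _ _ => exp_pos _) Finset.univ_nonempty
  rw [Rcont_const η A hη, gibbsSum_eq_exp_mul η _ T j, log_mul (exp_ne_zero _) hQ.ne', log_exp]
  field_simp
  ring

lemma contPlay_mem_Icc (h0 : Fin m → ℝ) (x : ℝ → Fin n → ℝ) (t : ℝ) (i : Fin m) :
    contPlay η A h0 x t i ∈ Set.Icc 0 1 := by
  have hle := Finset.single_le_sum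
    (f := fun j => exp (η * (h0 j - ∑ k, cumX x t k * A k j)))
    (fun _ _ => (exp_pos _).le) (Finset.mem_univ i)
  exact ⟨div_nonneg (exp_pos _).le ((exp_pos _).le.trans hle),
    div_le_one_of_le₀ hle ((exp_pos _).le.trans hle)⟩

lemma abs_sum_mul_mul_le_sum_abs {p : Fin n → ℝ} {q : Fin m → ℝ}
    (hp : ∀ k, p k ∈ Set.Icc 0 1) (hq : ∀ i, q i ∈ Set.Icc 0 1) :
    |∑ k, ∑ i, p k * A k i * q i| ≤ ∑ k, ∑ i, |A k i| := by
  refine (Finset.abs_sum_le_sum_abs _ _).trans (Finset.sum_le_sum fun k _ => ?_)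
  refine (Finset.abs_sum_le_sum_abs _ _).trans (Finset.sum_le_sum fun i _ => ?_)
  rw [abs_mul, abs_mul, abs_of_nonneg (hp k).1, abs_of_nonneg (hq i).1]
  calc p k * |A k i| * q i ≤ p k * |A k i| :=
        mul_le_of_le_one_right (mul_nonneg (hp k).1 (abs_nonneg _)) (hq i).2
    _ ≤ |A k i| := mul_le_of_le_one_left (abs_nonneg _) (hp k).2

lemma Rcont_le (h0 : Fin m → ℝ) {T : ℝ} (hT : 0 ≤ T) {x : ℝ → Fin n → ℝ}
    (hx : ∀ t ∈ Set.Icc 0 T, x t ∈ stdSimplex ℝ (Fin n)) :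
    Rcont η A h0 T x ≤ (∑ k, ∑ i, |A k i|) * T := by
  have hbound : ∀ t ∈ Set.uIoc 0 T,
      ‖∑ k, ∑ i, x t k * A k i * contPlay η A h0 x t i‖ ≤ ∑ k, ∑ i, |A k i| := by
    intro t ht
    rw [Set.uIoc_of_le hT] at ht
    exact abs_sum_mul_mul_le_sum_abs A
      (mem_Icc_of_mem_stdSimplex (hx t (Set.Ioc_subset_Icc_self ht)))
      (contPlay_mem_Icc η A h0 x t)
  calc Rcont η A h0 T x ≤ ‖Rcont η A h0 T x‖ := le_norm_self _
    _ ≤ (∑ k, ∑ i, |A k i|) * |T - 0| :=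
      intervalIntegral.norm_integral_le_of_norm_le_const hbound
    _ = (∑ k, ∑ i, |A k i|) * T := by rw [sub_zero, abs_of_nonneg hT]

lemma Rcont_le_RcontStar (h0 : Fin m → ℝ) {T : ℝ} (hT : 0 ≤ T) {x : ℝ → Fin n → ℝ}
    (hmeas : Measurable x) (hx : ∀ t ∈ Set.Icc 0 T, x t ∈ stdSimplex ℝ (Fin n)) :
    Rcont η A h0 T x ≤ RcontStar η A h0 T := by
  refine le_csSup ⟨(∑ k, ∑ i, |A k i|) * T, ?_⟩ ⟨x, hmeas, hx, rfl⟩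
  rintro r ⟨y, -, hy, rfl⟩
  exact Rcont_le η A h0 hT hy

end Rewards

theorem stmt3_general {n m : ℕ} (η T : ℝ) (hη : 0 < η) (hT : 0 < T)
    (A : Matrix (Fin n) (Fin m) ℝ) (x : Fin n → ℝ) (hx : x ∈ stdSimplex ℝ (Fin n))
    (j : Fin m) (hj : j ∈ BRset A x) :
    (Real.log m / η + T * (∑ k, x k * A k j) -
      (1/η) * Real.log (((BRset A x).card : ℝ) +
        ∑ i ∈ Finset.univ \ BRset A x,
          Real.exp (η * T * ((∑ k, x k * A k j) - (∑ k, x k * A k i))))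
      ≤ RcontStar η A (fun _ => 0) T) ∧
    ∀ i, i ∉ BRset A x → (∑ k, x k * A k j) - (∑ k, x k * A k i) < 0 := by
  refine ⟨?_, fun i hi => sub_neg.2 (vecMul_lt_of_not_mem_BRset hj hi)⟩
  have hsplit := sum_exp_mul_sub_eq_card_add (x ᵥ* A) (η * T) (BRset A x) j
    fun i hi => vecMul_eq_of_mem_BRset hi hj
  calc _ = Rcont η A (fun _ => 0) T (fun _ => x) := by
        rw [Rcont_const_eq η A hη.ne', hsplit]; rfl
    _ ≤ RcontStar η A (fun _ => 0) T :=
      Rcont_le_RcontStar η A _ hT.le measurable_const fun _ _ => hx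

/-- lower bound on `R*_cont(0,T)` from any `x ∈ Δ_n` and any best
response `j ∈ BR(x)`, together with the noted negativity for `i ∉ BR(x)`. -/
theorem stmt3 {n m : ℕ} (hn : 0 < n) (hm : 0 < m) (η T : ℝ) (hη : 0 < η) (hT : 0 < T)
    (A : Matrix (Fin n) (Fin m) ℝ) (x : Fin n → ℝ) (hx : x ∈ stdSimplex ℝ (Fin n))
    (j : Fin m) (hj : j ∈ BRset A x) :
    (Real.log m / η + T * (∑ k, x k * A k j) -
      (1/η) * Real.log (((BRset A x).card : ℝ) +
        ∑ i ∈ Finset.univ \ BRset A x,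
          Real.exp (η * T * ((∑ k, x k * A k j) - (∑ k, x k * A k i))))
      ≤ RcontStar η A (fun _ => 0) T) ∧
    ∀ i, i ∉ BRset A x → (∑ k, x k * A k j) - (∑ k, x k * A k i) < 0 :=
  stmt3_general η T hη hT A x hx j hj
end

section
/- Consider the matching-pennies game with optimizer utility matrix A = [[1, −1], [−1, 1]] (so the learner's matrix is −A), and a learner running MWU with step size η > 0 and zero initial history. Let T ∈ ℕ be even, and let the optimizer play the pure action a_2 at every odd round t and the pure action a_1 at every even round t (rounds t = 1, …, T). Then at every odd round the learner plays (1/2, 1/2), at every even round the learner plays ( e^{η}/(e^{η}+e^{−η}), e^{−η}/(e^{η}+e^{−η}) ), and the optimizer's total reward over the T rounds equals (T/2)·tanh(η). -/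
noncomputable def discPlay {n m : ℕ} (η : ℝ) (A : Matrix (Fin n) (Fin m) ℝ)
    (h0 : Fin m → ℝ) (x : ℕ → Fin n → ℝ) (t : ℕ) (i : Fin m) : ℝ :=
  Real.exp (η * (h0 i - ∑ s ∈ Finset.range t, ∑ k, x s k * A k i)) /
    ∑ j, Real.exp (η * (h0 j - ∑ s ∈ Finset.range t, ∑ k, x s k * A k j))

noncomputable def Rdisc {n m : ℕ} (η : ℝ) (A : Matrix (Fin n) (Fin m) ℝ)
    (h0 : Fin m → ℝ) (T : ℕ) (x : ℕ → Fin n → ℝ) : ℝ :=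
  ∑ t ∈ Finset.range T, ∑ k, ∑ i, x t k * A k i * discPlay η A h0 x t i

noncomputable def MP : Matrix (Fin 2) (Fin 2) ℝ := !![1, -1; -1, 1]

noncomputable def mpStrat : ℕ → Fin 2 → ℝ := fun t => if t % 2 = 0 then ![0, 1] else ![1, 0]

lemma mpS0 (t : ℕ) :
    (∑ s ∈ Finset.range t, (mpStrat s 0 * MP 0 0 + mpStrat s 1 * MP 1 0)) = -((t % 2 : ℕ) : ℝ) ∧
    (∑ s ∈ Finset.range t, (mpStrat s 0 * MP 0 1 + mpStrat s 1 * MP 1 1)) = ((t % 2 : ℕ) : ℝ) := by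
  induction t with
  | zero => simp
  | succ t ih =>
    obtain ⟨ih0, ih1⟩ := ih
    rw [Finset.sum_range_succ, Finset.sum_range_succ, ih0, ih1]
    rcases Nat.mod_two_eq_zero_or_one t with h | h
    · have h' : (t + 1) % 2 = 1 := by omega
      simp [mpStrat, h, h', MP]
    · have h' : (t + 1) % 2 = 0 := by omega
      simp [mpStrat, h, h', MP]

lemma play_even (η : ℝ) (t : ℕ) (ht : t % 2 = 0) :
    discPlay η MP (fun _ => 0) mpStrat t = ![1/2, 1/2] := by
  obtain ⟨h0, h1⟩ := mpS0 t
  rw [ht] at h0 h1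
  norm_num at h0 h1
  funext i
  fin_cases i <;>
  · simp only [discPlay, Fin.sum_univ_two, Fin.mk_zero, Fin.mk_one]
    rw [h0, h1]
    norm_num

lemma play_odd (η : ℝ) (t : ℕ) (ht : t % 2 = 1) :
    discPlay η MP (fun _ => 0) mpStrat t =
      ![Real.exp η / (Real.exp η + Real.exp (-η)),
        Real.exp (-η) / (Real.exp η + Real.exp (-η))] := by
  obtain ⟨h0, h1⟩ := mpS0 t
  rw [ht] at h0 h1
  norm_num at h0 h1
  funext i
  fin_cases i <;>
  · simp only [discPlay, Fin.sum_univ_two, Fin.mk_zero, Fin.mk_one]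
    rw [h0, h1]
    norm_num

lemma htanh (η : ℝ) :
    Real.tanh η = (Real.exp η - Real.exp (-η)) / (Real.exp η + Real.exp (-η)) := by
  have hden : Real.exp η + Real.exp (-η) ≠ 0 := by positivity
  rw [Real.tanh_eq_sinh_div_cosh, Real.sinh_eq, Real.cosh_eq]
  field_simp

lemma Rsum (η : ℝ) (m : ℕ) :
    Rdisc η MP (fun _ => 0) (2 * m) mpStrat = (m : ℝ) * Real.tanh η := by
  have hden : Real.exp η + Real.exp (-η) ≠ 0 := by positivity
  induction m with
  | zero => simp [Rdisc]
  | succ m ih =>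
    have e1 : 2 * (m + 1) = (2 * m + 1) + 1 := by ring
    unfold Rdisc at ih ⊢
    rw [e1, Finset.sum_range_succ, Finset.sum_range_succ, ih]
    have heven : (2 * m) % 2 = 0 := by omega
    have hodd : (2 * m + 1) % 2 = 1 := by omega
    rw [play_even η (2 * m) heven, play_odd η (2 * m + 1) hodd]
    have hs0 : mpStrat (2 * m) = ![0, 1] := by simp [mpStrat, heven]
    have hs1 : mpStrat (2 * m + 1) = ![1, 0] := by simp [mpStrat, hodd]
    rw [hs0, hs1]
    simp only [Fin.sum_univ_two]
    rw [htanh η]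
    push_cast
    simp [MP]
    field_simp
    ring

/-- in matching pennies against MWU with step `η`, playing `a_2` at odd
rounds and `a_1` at even rounds (of which there are `T`, `T` even), the learner plays
`(1/2, 1/2)` at every odd round, `(e^η/(e^η+e^{−η}), e^{−η}/(e^η+e^{−η}))` at every
even round, and the optimizer's total reward equals `(T/2)·tanh η`. -/
theorem stmt7 (η : ℝ) (hη : 0 < η) (T : ℕ) (hT : Even T) :
    (∀ t : ℕ, t % 2 = 0 → discPlay η MP (fun _ => 0) mpStrat t = ![1/2, 1/2]) ∧
    (∀ t : ℕ, t % 2 = 1 → discPlay η MP (fun _ => 0) mpStrat t =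
      ![Real.exp η / (Real.exp η + Real.exp (-η)),
        Real.exp (-η) / (Real.exp η + Real.exp (-η))]) ∧
    Rdisc η MP (fun _ => 0) T mpStrat = (T : ℝ) / 2 * Real.tanh η := by
  refine ⟨fun t ht => play_even η t ht, fun t ht => play_odd η t ht, ?_⟩
  obtain ⟨m, hm⟩ := hT
  have hm2 : T = 2 * m := by omega
  rw [hm2, Rsum]
  push_cast
  ring
end

section
/- Consider the matching-pennies game with optimizer utility matrix A = [[1, −1], [−1, 1]]. For every η > 0 and T > 0, the optimal continuous-time reward of an optimizer against a learner using the Replicator Dynamics with parameter η and zero initial history is zero: R*_cont(0, T) = 0. Equivalently, max_{x ∈ Δ_2} (1/η)·[ ln 2 − ln( e^{−ηT(x_1 − x_2)} + e^{ηT(x_1 − x_2)} ) ] = 0. -/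
open MeasureTheory

/-!
With `g = x₀ - x₁` and `u t = ∫₀ᵗ g`, the payoff at time `t` is `-tanh (η u t) * g t`, which is
minus the derivative of `log (cosh (η u t)) / η`. Since `u` is only absolutely continuous, this
is integrated with the fundamental theorem of calculus for absolutely continuous functions, giving
`R_cont = -log (cosh (η u T)) / η ≤ 0`, with equality for the uniform strategy. The closed form
is the same quantity, because `e^{-w} + e^{w} = 2 cosh w`.
-/

open Set Real intervalIntegral
open scoped NNReal

theorem LipschitzWith.comp_absolutelyContinuousOnInterval {X Y : Type*} [PseudoMetricSpace X]
    [PseudoMetricSpace Y] {F : X → Y} {f : ℝ → X} {K : ℝ≥0} {a b : ℝ}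
    (hF : LipschitzWith K F) (hf : AbsolutelyContinuousOnInterval f a b) :
    AbsolutelyContinuousOnInterval (F ∘ f) a b := by
  rw [absolutelyContinuousOnInterval_iff] at hf ⊢
  intro ε hε
  obtain ⟨δ, hδ, hfδ⟩ := hf (ε / (K + 1)) (by positivity)
  refine ⟨δ, hδ, fun E hE hEδ => ?_⟩
  calc ∑ i ∈ Finset.range E.1, dist (F (f (E.2 i).1)) (F (f (E.2 i).2))
      ≤ ∑ i ∈ Finset.range E.1, K * dist (f (E.2 i).1) (f (E.2 i).2) :=
        Finset.sum_le_sum fun i _ => hF.dist_le_mul _ _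
    _ = K * ∑ i ∈ Finset.range E.1, dist (f (E.2 i).1) (f (E.2 i).2) := (Finset.mul_sum ..).symm
    _ ≤ K * (ε / (K + 1)) := by gcongr; exact (hfδ E hE hEδ).le
    _ < (K + 1) * (ε / (K + 1)) := by gcongr; linarith
    _ = ε := by field

theorem integral_comp_primitive_mul_eq_sub {g φ Φ : ℝ → ℝ} {K : ℝ≥0} {a b : ℝ}
    (hg : IntervalIntegrable g volume a b) (hΦ : ∀ v, HasDerivAt Φ (φ v) v)
    (hφ : ∀ v, |φ v| ≤ K) :
    ∫ t in a..b, φ (∫ s in a..t, g s) * g t = Φ (∫ s in a..b, g s) - Φ 0 := by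
  have hΦK : LipschitzWith K Φ := lipschitzWith_of_nnnorm_deriv_le
    (fun v => (hΦ v).differentiableAt) fun v => by
      rw [(hΦ v).deriv, ← NNReal.coe_le_coe, coe_nnnorm]
      exact hφ v
  have hac : AbsolutelyContinuousOnInterval (Φ ∘ fun t => ∫ s in a..t, g s) a b :=
    hΦK.comp_absolutelyContinuousOnInterval
      (hg.absolutelyContinuousOnInterval_intervalIntegral left_mem_uIcc)
  have hFTC := hac.integral_deriv_eq_sub
  simp only [Function.comp_apply, integral_same] at hFTC
  rw [← hFTC]
  apply intervalIntegral.integral_congr_ae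
  filter_upwards [hg.ae_hasDerivAt_integral] with t ht htab
  exact (((hΦ _).comp t (ht (uIoc_subset_uIcc htab) a left_mem_uIcc)).deriv).symm

theorem hasDerivAt_log_cosh (v : ℝ) : HasDerivAt (fun v => log (cosh v)) (tanh v) v := by
  simpa [tanh_eq_sinh_div_cosh] using (hasDerivAt_cosh v).log (cosh_pos v).ne'

theorem log_cosh_nonneg (v : ℝ) : 0 ≤ log (cosh v) := log_nonneg (one_le_cosh v)

theorem log_exp_neg_add_exp (w : ℝ) : log (exp (-w) + exp w) = log 2 + log (cosh w) := by
  rw [← log_mul two_ne_zero (cosh_pos w).ne', cosh_eq]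
  ring_nf

theorem MP_payoff_eq (η : ℝ) (x : ℝ → Fin 2 → ℝ) (t : ℝ) :
    ∑ k, ∑ i, x t k * MP k i * contPlay η MP (fun _ => 0) x t i
      = -(tanh (η * (cumX x t 0 - cumX x t 1)) * (x t 0 - x t 1)) := by
  set w := η * (cumX x t 0 - cumX x t 1)
  have hden : exp (-w) + exp w ≠ 0 := by positivity
  simp only [contPlay, MP, Fin.sum_univ_two, Matrix.of_apply, Matrix.cons_val',
    Matrix.cons_val_zero, Matrix.cons_val_one, Matrix.empty_val', Matrix.cons_val_fin_one]
  rw [tanh_eq_sinh_div_cosh, sinh_eq, cosh_eq]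
  have h0 : η * (0 - (cumX x t 0 * 1 + cumX x t 1 * -1)) = -w := by ring
  have h1 : η * (0 - (cumX x t 0 * -1 + cumX x t 1 * 1)) = w := by ring
  rw [h0, h1]
  field_simp
  ring

theorem intervalIntegrable_apply_of_mem_stdSimplex {ι : Type*} [Fintype ι] {x : ℝ → ι → ℝ} {T : ℝ}
    (hT : 0 ≤ T) (hx : Measurable x) (hxs : ∀ t ∈ Icc 0 T, x t ∈ stdSimplex ℝ ι) (k : ι) :
    IntervalIntegrable (fun t => x t k) volume 0 T := by
  refine (intervalIntegrable_const (c := (1 : ℝ))).mono_fun'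
    ((measurable_pi_apply k).comp hx).aestronglyMeasurable ?_
  refine ae_restrict_of_forall_mem measurableSet_uIoc fun t ht => ?_
  rw [uIoc_of_le hT] at ht
  have := mem_Icc_of_mem_stdSimplex (hxs t (Ioc_subset_Icc_self ht)) k
  simp only [Real.norm_eq_abs, abs_le]
  constructor <;> linarith [this.1, this.2]

theorem Rcont_MP_eq {η T : ℝ} (hη : η ≠ 0) (hT : 0 ≤ T) {x : ℝ → Fin 2 → ℝ} (hx : Measurable x)
    (hxs : ∀ t ∈ Icc 0 T, x t ∈ stdSimplex ℝ (Fin 2)) :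
    Rcont η MP (fun _ => 0) T x = -log (cosh (η * ∫ t in 0..T, (x t 0 - x t 1))) / η := by
  have hxk := intervalIntegrable_apply_of_mem_stdSimplex hT hx hxs
  have hcum : ∀ t ∈ uIcc 0 T, cumX x t 0 - cumX x t 1 = ∫ s in 0..t, (x s 0 - x s 1) := fun t ht =>
    (integral_sub ((hxk 0).mono_set (uIcc_subset_uIcc left_mem_uIcc ht))
      ((hxk 1).mono_set (uIcc_subset_uIcc left_mem_uIcc ht))).symm
  have hΦ : ∀ v, HasDerivAt (fun v => log (cosh (η * v)) / η) (tanh (η * v)) v := fun v =>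
    (((hasDerivAt_log_cosh (η * v)).comp v ((hasDerivAt_id v).const_mul η)).div_const η).congr_deriv
      (by field_simp)
  calc Rcont η MP (fun _ => 0) T x
      = ∫ t in 0..T, -(tanh (η * ∫ s in 0..t, (x s 0 - x s 1)) * (x t 0 - x t 1)) :=
        integral_congr fun t ht => by simp only [MP_payoff_eq, hcum t ht]
    _ = -(log (cosh (η * ∫ t in 0..T, (x t 0 - x t 1))) / η - log (cosh (η * 0)) / η) := by
        rw [intervalIntegral.integral_neg, integral_comp_primitive_mul_eq_sub
          ((hxk 0).sub (hxk 1)) hΦ (K := 1) fun v => (abs_tanh_lt_one _).le]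
    _ = _ := by simp [neg_div]

/-- in matching pennies, the optimal continuous-time reward against the
Replicator Dynamics is zero; equivalently, the maximum of
`(1/η)·[ln 2 − ln(e^{−ηT(x₁−x₂)} + e^{ηT(x₁−x₂)})]` over the simplex is `0`. -/
theorem stmt8 (η T : ℝ) (hη : 0 < η) (hT : 0 < T) :
    RcontStar η MP (fun _ => 0) T = 0 ∧
    IsGreatest {v | ∃ x ∈ stdSimplex ℝ (Fin 2),
      v = (1/η) * (Real.log 2 -
        Real.log (Real.exp (-(η * T * (x 0 - x 1))) + Real.exp (η * T * (x 0 - x 1))))}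
      0 := by
  have hhalf : (fun _ => 1 / 2 : Fin 2 → ℝ) ∈ stdSimplex ℝ (Fin 2) :=
    ⟨fun _ => by norm_num, by norm_num [Fin.sum_univ_two]⟩
  have hnonpos : ∀ w, -log (cosh w) / η ≤ 0 := fun w =>
    div_nonpos_of_nonpos_of_nonneg (neg_nonpos.2 (log_cosh_nonneg w)) hη.le
  refine ⟨IsGreatest.csSup_eq ⟨⟨fun _ _ => 1 / 2, measurable_const, fun _ _ => hhalf, ?_⟩, ?_⟩,
    ⟨fun _ => 1 / 2, hhalf, by norm_num⟩, ?_⟩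
  · rw [Rcont_MP_eq hη.ne' hT.le measurable_const fun _ _ => hhalf]
    simp
  · rintro r ⟨x, hx, hxs, rfl⟩
    exact (Rcont_MP_eq hη.ne' hT.le hx hxs).trans_le (hnonpos _)
  · rintro v ⟨x, -, rfl⟩
    calc _ = -log (cosh (η * T * (x 0 - x 1))) / η := by rw [log_exp_neg_add_exp]; ring
      _ ≤ 0 := hnonpos _
end

section
/- Let m ≥ 1, η > 0, h ∈ ℝ^m and u ∈ [−1,1]^m. Define f : ℝ → ℝ by f(t) = ( Σ_{i=1}^m u_i·exp(η(h_i − u_i t)) ) / ( Σ_{i=1}^m exp(η(h_i − u_i t)) ). Then f is differentiable with f'(t) ≥ −η for all t ∈ ℝ, and consequently ∫_0^1 f(t) dt ≥ f(0) − η/2. -/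
/-! The quotient rule gives `f' = -η (E[u²] - E[u]²)` for the Gibbs expectation `E`; this variance
lies in `[0, 1]` since `u² ≤ 1`, so `f' ≥ -η`. Hence `f t + η t` is monotone, `f t ≥ f 0 - η t`,
and integrating over `[0, 1]` gives the bound on the integral. -/

open MeasureTheory

noncomputable def gibbsF {m : ℕ} (η : ℝ) (h u : Fin m → ℝ) (t : ℝ) : ℝ :=
  (∑ i, u i * Real.exp (η * (h i - u i * t))) / (∑ i, Real.exp (η * (h i - u i * t)))

open Real

theorem intervalIntegral_ge_of_hasDerivAt_ge {f f' : ℝ → ℝ} {a b c : ℝ} (hab : a ≤ b)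
    (hf : ∀ t, HasDerivAt f (f' t) t) (hf' : ∀ t, -c ≤ f' t) :
    (b - a) * f a - c * (b - a) ^ 2 / 2 ≤ ∫ t in a..b, f t := by
  have hmono : Monotone fun t => f t + c * t :=
    monotone_of_hasDerivAt_nonneg (f' := fun t => f' t + c * 1)
      (fun t => (hf t).add ((hasDerivAt_id t).const_mul c)) fun t => by
        show 0 ≤ f' t + c * 1
        linarith [hf' t]
  have hlin (t : ℝ) :
      HasDerivAt (fun t => f a * t - c * (t - a) ^ 2 / 2) (f a - c * (t - a)) t :=
    (((hasDerivAt_id t).const_mul (f a)).sub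
      ((((hasDerivAt_id t).sub_const a).pow 2).const_mul c |>.div_const 2)).congr_deriv
      (by simp only [id, Nat.cast_ofNat]; ring)
  have hlin_int : IntervalIntegrable (fun t => f a - c * (t - a)) volume a b :=
    (by fun_prop : Continuous fun t => f a - c * (t - a)).intervalIntegrable a b
  have hcont : Continuous f := continuous_iff_continuousAt.2 fun t => (hf t).continuousAt
  calc (b - a) * f a - c * (b - a) ^ 2 / 2 = ∫ t in a..b, (f a - c * (t - a)) := by
        rw [intervalIntegral.integral_eq_sub_of_hasDerivAt (fun t _ => hlin t) hlin_int]
        ring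
    _ ≤ ∫ t in a..b, f t :=
        intervalIntegral.integral_mono_on hab hlin_int (hcont.intervalIntegrable a b)
          fun t ht => by linarith [hmono ht.1]

section GibbsWeights

variable {ι : Type*} [Fintype ι] (η : ℝ) (h u : ι → ℝ)

theorem hasDerivAt_sum_mul_exp (c : ι → ℝ) (t : ℝ) :
    HasDerivAt (fun t => ∑ i, c i * exp (η * (h i - u i * t)))
      (-η * ∑ i, c i * u i * exp (η * (h i - u i * t))) t := by
  have hterm (i : ι) : HasDerivAt (fun t => c i * exp (η * (h i - u i * t)))
      (-η * (c i * u i * exp (η * (h i - u i * t)))) t :=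
    ((((hasDerivAt_id t).const_mul (u i)).const_sub (h i)).const_mul η).exp.const_mul (c i)
      |>.congr_deriv (by simp only [id, mul_one]; ring)
  simpa only [Finset.mul_sum] using HasDerivAt.fun_sum (u := Finset.univ) fun i _ => hterm i

theorem sum_sq_mul_exp_div_sum_exp_le_one (hu : ∀ i, u i ∈ Set.Icc (-1 : ℝ) 1) (t : ℝ) :
    (∑ i, u i ^ 2 * exp (η * (h i - u i * t))) / (∑ i, exp (η * (h i - u i * t))) ≤ 1 := by
  refine div_le_one_of_le₀ (Finset.sum_le_sum fun i _ => ?_)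
    (Finset.sum_nonneg fun i _ => (exp_pos _).le)
  have hsq : u i ^ 2 ≤ 1 := sq_le_one_iff_abs_le_one _ |>.2 (abs_le.2 (hu i))
  exact mul_le_of_le_one_left (exp_pos _).le hsq

end GibbsWeights

section Gibbs

variable {m : ℕ} (η : ℝ) (h u : Fin m → ℝ)

theorem gibbsF_hasDerivAt [NeZero m] (t : ℝ) :
    HasDerivAt (gibbsF η h u)
      (-η * ((∑ i, u i ^ 2 * exp (η * (h i - u i * t))) / (∑ i, exp (η * (h i - u i * t))) -
        gibbsF η h u t ^ 2)) t := by
  have hS := hasDerivAt_sum_mul_exp η h u 1 t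
  have hN := hasDerivAt_sum_mul_exp η h u u t
  simp only [Pi.one_apply, one_mul] at hS
  simp only [← sq] at hN
  have hpos : 0 < ∑ i, exp (η * (h i - u i * t)) :=
    Finset.sum_pos (fun i _ => exp_pos _) Finset.univ_nonempty
  refine (hN.div hS hpos.ne').congr_deriv ?_
  unfold gibbsF
  generalize ∑ i, exp (η * (h i - u i * t)) = S at hpos ⊢
  generalize ∑ i, u i * exp (η * (h i - u i * t)) = N
  generalize ∑ i, u i ^ 2 * exp (η * (h i - u i * t)) = Q
  field_simp
  ring

theorem neg_le_deriv_gibbsF [NeZero m] (hη : 0 ≤ η) (hu : ∀ i, u i ∈ Set.Icc (-1 : ℝ) 1)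
    (t : ℝ) : -η ≤ deriv (gibbsF η h u) t := by
  rw [(gibbsF_hasDerivAt η h u t).deriv]
  have hmoment := sum_sq_mul_exp_div_sum_exp_le_one η h u hu t
  nlinarith [sq_nonneg (gibbsF η h u t)]

end Gibbs

/-- for `u ∈ [−1,1]^m`, `f` is differentiable with `f'(t) ≥ −η`,
and consequently `∫_0^1 f(t) dt ≥ f(0) − η/2`. -/
theorem stmt11 (m : ℕ) (hm : 0 < m) (η : ℝ) (hη : 0 < η) (h u : Fin m → ℝ)
    (hu : ∀ i, u i ∈ Set.Icc (-1 : ℝ) 1) :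
    (∀ t : ℝ, DifferentiableAt ℝ (gibbsF η h u) t) ∧
    (∀ t : ℝ, -η ≤ deriv (gibbsF η h u) t) ∧
    gibbsF η h u 0 - η / 2 ≤ ∫ t in (0:ℝ)..1, gibbsF η h u t := by
  have : NeZero m := ⟨hm.ne'⟩
  have hderiv (t : ℝ) := gibbsF_hasDerivAt η h u t
  have hbound (t : ℝ) := neg_le_deriv_gibbsF η h u hη.le hu t
  refine ⟨fun t => (hderiv t).differentiableAt, hbound, ?_⟩
  have hint := intervalIntegral_ge_of_hasDerivAt_ge zero_le_one
    (fun t => (hderiv t).differentiableAt.hasDerivAt) hbound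
  norm_num at hint
  linarith
end

section
/- Let A ∈ ℝ^{n×m}, let x ∈ Δ_n, and let i₁ ≠ i₂ be column indices with x^⊤A e_{i₁} = x^⊤A e_{i₂}. Suppose there exists a row index k with x_k > 0 such that e_k^⊤A e_{i₁} ≠ e_k^⊤A e_{i₂}. Then there exist x', x'' ∈ Δ_n with (x' + x'')/2 = x, x'^⊤A e_{i₁} > x'^⊤A e_{i₂}, and x''^⊤A e_{i₁} < x''^⊤A e_{i₂}. -/
private lemma aux12 {n : ℕ} (x : Fin n → ℝ) (hx : x ∈ stdSimplex ℝ (Fin n))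
    (c : Fin n → ℝ) (k k' : Fin n) (hkk' : k ≠ k') (hk : 0 < x k) (hk' : 0 < x k')
    (hck : 0 < c k) (hck' : c k' < 0) :
    ∃ x' x'' : Fin n → ℝ, x' ∈ stdSimplex ℝ (Fin n) ∧ x'' ∈ stdSimplex ℝ (Fin n) ∧
      (∀ j, (x' j + x'' j) / 2 = x j) ∧
      (∑ l, x l * c l) < (∑ l, x' l * c l) ∧
      (∑ l, x'' l * c l) < (∑ l, x l * c l) := by
  obtain ⟨hx0, hx1⟩ := hx
  set ε := min (x k) (x k') with hε
  have hεpos : 0 < ε := lt_min hk hk'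
  set d : Fin n → ℝ := fun j => if j = k then 1 else if j = k' then -1 else 0 with hd
  have hdsum : ∑ l, d l = 0 := by
    have h : ∀ l, d l = (if l = k then (1:ℝ) else 0) + (if l = k' then (-1:ℝ) else 0) := by
      intro l
      simp only [hd]
      by_cases h1 : l = k
      · subst h1; simp [hkk']
      · simp [h1]
    simp [h, Finset.sum_add_distrib]
  have hdc : ∑ l, d l * c l = c k - c k' := by
    have h : ∀ l, d l * c l = (if l = k then c k else 0) + (if l = k' then -c k' else 0) := by
      intro l
      simp only [hd]
      by_cases h1 : l = k
      · subst h1; simp [hkk']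
      · by_cases h2 : l = k'
        · subst h2; simp [h1]
        · simp [h1, h2]
    simp only [h, Finset.sum_add_distrib, Finset.sum_ite_eq', Finset.mem_univ, if_pos]
    ring
  have hle1 : ε ≤ x k := min_le_left (x k) (x k')
  have hle2 : ε ≤ x k' := min_le_right (x k) (x k')
  refine ⟨fun j => x j + ε * d j, fun j => x j - ε * d j, ⟨?_, ?_⟩, ⟨?_, ?_⟩, ?_, ?_, ?_⟩
  · intro j
    by_cases h1 : j = k
    · have hdj : d j = 1 := by simp [hd, h1]
      simp only [hdj]; rw [h1]; nlinarith
    · by_cases h2 : j = k'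
      · have hdj : d j = -1 := by simp [hd, h2, (Ne.symm hkk' : ¬ k' = k)]
        simp only [hdj]; rw [h2]; nlinarith
      · have hdj : d j = 0 := by simp [hd, h1, h2]
        simp only [hdj, mul_zero, add_zero, sub_zero]; exact hx0 j
  · simp [Finset.sum_add_distrib, ← Finset.mul_sum, hdsum, hx1]
  · intro j
    by_cases h1 : j = k
    · have hdj : d j = 1 := by simp [hd, h1]
      simp only [hdj]; rw [h1]; nlinarith
    · by_cases h2 : j = k'
      · have hdj : d j = -1 := by simp [hd, h2, (Ne.symm hkk' : ¬ k' = k)]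
        simp only [hdj]; rw [h2]; nlinarith
      · have hdj : d j = 0 := by simp [hd, h1, h2]
        simp only [hdj, mul_zero, add_zero, sub_zero]; exact hx0 j
  · simp [Finset.sum_sub_distrib, ← Finset.mul_sum, hdsum, hx1]
  · intro j; ring
  · have h : ∑ l, (x l + ε * d l) * c l = ∑ l, x l * c l + ε * (c k - c k') := by
      simp only [add_mul, Finset.sum_add_distrib, mul_assoc, ← Finset.mul_sum, hdc]
    rw [h]
    nlinarith
  · have h : ∑ l, (x l - ε * d l) * c l = ∑ l, x l * c l - ε * (c k - c k') := by
      simp only [sub_mul, Finset.sum_sub_distrib, mul_assoc, ← Finset.mul_sum, hdc]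
    rw [h]
    nlinarith

/-- if `x ∈ Δ_n` gives equal payoffs to columns `i₁ ≠ i₂` of `A`, but
some row `k` in the support of `x` distinguishes them, then `x` splits as the average
of two simplex points `x', x''` with `x'ᵀAe_{i₁} > x'ᵀAe_{i₂}` and
`x''ᵀAe_{i₁} < x''ᵀAe_{i₂}`. -/
theorem stmt12 {n m : ℕ} (A : Matrix (Fin n) (Fin m) ℝ) (x : Fin n → ℝ)
    (hx : x ∈ stdSimplex ℝ (Fin n)) (i₁ i₂ : Fin m) (hne : i₁ ≠ i₂)
    (heq : ∑ k, x k * A k i₁ = ∑ k, x k * A k i₂)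
    (k : Fin n) (hk : 0 < x k) (hA : A k i₁ ≠ A k i₂) :
    ∃ x' x'' : Fin n → ℝ, x' ∈ stdSimplex ℝ (Fin n) ∧ x'' ∈ stdSimplex ℝ (Fin n) ∧
      (∀ j, (x' j + x'' j) / 2 = x j) ∧
      (∑ l, x' l * A l i₂) < (∑ l, x' l * A l i₁) ∧
      (∑ l, x'' l * A l i₁) < (∑ l, x'' l * A l i₂) := by
  set c : Fin n → ℝ := fun l => A l i₁ - A l i₂ with hc
  have hsplit : ∀ y : Fin n → ℝ, ∑ l, y l * c l = ∑ l, y l * A l i₁ - ∑ l, y l * A l i₂ := by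
    intro y
    simp [hc, mul_sub, Finset.sum_sub_distrib]
  have hcsum : ∑ l, x l * c l = 0 := by rw [hsplit]; linarith
  have hck : c k ≠ 0 := sub_ne_zero.mpr hA
  have herase : ∑ l ∈ Finset.univ.erase k, x l * c l = -(x k * c k) := by
    have h := Finset.sum_erase_add Finset.univ (fun l => x l * c l) (Finset.mem_univ k)
    linarith
  have key : ∀ k' : Fin n, k' ≠ k → 0 < x k' → 0 < x k' * c k' → c k < 0 →
      ∃ x' x'' : Fin n → ℝ, x' ∈ stdSimplex ℝ (Fin n) ∧ x'' ∈ stdSimplex ℝ (Fin n) ∧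
      (∀ j, (x' j + x'' j) / 2 = x j) ∧
      (∑ l, x' l * A l i₂) < (∑ l, x' l * A l i₁) ∧
      (∑ l, x'' l * A l i₁) < (∑ l, x'' l * A l i₂) := by
    intro k' hk'ne hxk' hprod hckneg
    have hck' : 0 < c k' := by
      by_contra h
      push_neg at h
      nlinarith
    obtain ⟨x', x'', h1, h2, h3, h4, h5⟩ :=
      aux12 x hx c k' k hk'ne hxk' hk hck' hckneg
    simp only [hcsum, hsplit] at h4 h5
    exact ⟨x', x'', h1, h2, h3, by linarith, by linarith⟩
  rcases hck.lt_or_gt with hneg | hpos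
  · -- c k < 0: erase-sum positive, find k' with x k' * c k' > 0
    have hlt : ∑ l ∈ Finset.univ.erase k, (0:ℝ) < ∑ l ∈ Finset.univ.erase k, x l * c l := by
      rw [herase, Finset.sum_const_zero]; nlinarith
    obtain ⟨k', hk'mem, hk'⟩ := Finset.exists_lt_of_sum_lt hlt
    have hk'ne : k' ≠ k := (Finset.mem_erase.mp hk'mem).1
    have hxk' : 0 < x k' := by
      rcases (hx.1 k').lt_or_eq with h | h
      · exact h
      · exfalso; rw [← h] at hk'; simp at hk'
    exact key k' hk'ne hxk' hk' hneg
  · -- c k > 0: erase-sum negative, find k' with x k' * c k' < 0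
    have hlt : ∑ l ∈ Finset.univ.erase k, x l * c l < ∑ l ∈ Finset.univ.erase k, (0:ℝ) := by
      rw [herase, Finset.sum_const_zero]; nlinarith
    obtain ⟨k', hk'mem, hk'⟩ := Finset.exists_lt_of_sum_lt hlt
    have hk'ne : k' ≠ k := (Finset.mem_erase.mp hk'mem).1
    have hxk' : 0 < x k' := by
      rcases (hx.1 k').lt_or_eq with h | h
      · exact h
      · exfalso; rw [← h] at hk'; simp at hk'
    have hck' : c k' < 0 := by
      by_contra h
      push_neg at h
      nlinarith
    obtain ⟨x', x'', h1, h2, h3, h4, h5⟩ :=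
      aux12 x hx c k k' (Ne.symm hk'ne) hk hxk' hpos hck'
    simp only [hcsum, hsplit] at h4 h5
    exact ⟨x', x'', h1, h2, h3, by linarith, by linarith⟩
end

section
/- Let m ≥ 1, let y ∈ Δ_m be a probability vector, let u, v ∈ ℝ^m and V ∈ ℝ satisfy (u_i + v_i)/2 ≥ V for every i ∈ [m], and let η ≥ 0. Define y' ∈ Δ_m by y'_i = y_i·e^{−η u_i} / Σ_{j=1}^m y_j·e^{−η u_j}. Then (a) Σ_i u_i·y'_i ≤ Σ_i u_i·y_i, and (b) Σ_i u_i·y_i + Σ_i v_i·y'_i ≥ 2V + ( Σ_i u_i·y_i − Σ_i u_i·y'_i ) ≥ 2V. -/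
/-- The one-step MWU (Gibbs) reweighting of a probability vector `y` with step `η`
and losses `u`: `y'_i = y_i·e^{−η u_i} / Σ_j y_j·e^{−η u_j}`. -/
noncomputable def mwuStep {m : ℕ} (η : ℝ) (u y : Fin m → ℝ) (i : Fin m) : ℝ :=
  y i * Real.exp (-(η * u i)) / ∑ j, y j * Real.exp (-(η * u j))

/-- for `y ∈ Δ_m`, `η ≥ 0`, and `u, v` with `(u_i + v_i)/2 ≥ V` for all
`i`, the MWU reweighting `y'` of `y` satisfies `y' ∈ Δ_m`,
(a) `Σ u_i y'_i ≤ Σ u_i y_i`, and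
(b) `Σ u_i y_i + Σ v_i y'_i ≥ 2V + (Σ u_i y_i − Σ u_i y'_i) ≥ 2V`. -/
theorem stmt13 (m : ℕ) (hm : 0 < m) (y : Fin m → ℝ) (hy : y ∈ stdSimplex ℝ (Fin m))
    (u v : Fin m → ℝ) (V : ℝ) (hV : ∀ i, V ≤ (u i + v i) / 2) (η : ℝ) (hη : 0 ≤ η) :
    mwuStep η u y ∈ stdSimplex ℝ (Fin m) ∧
    (∑ i, u i * mwuStep η u y i ≤ ∑ i, u i * y i) ∧
    (2 * V + (∑ i, u i * y i - ∑ i, u i * mwuStep η u y i) ≤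
      ∑ i, u i * y i + ∑ i, v i * mwuStep η u y i) ∧
    (2 * V ≤ 2 * V + (∑ i, u i * y i - ∑ i, u i * mwuStep η u y i)) := by
  obtain ⟨hy0, hy1⟩ := hy
  set e : Fin m → ℝ := fun i => Real.exp (-(η * u i)) with he
  set Z : ℝ := ∑ j, y j * e j with hZdef
  have hterm : ∀ j, 0 ≤ y j * e j := fun j =>
    mul_nonneg (hy0 j) (Real.exp_nonneg _)
  have hZ : 0 < Z := by
    have hex : ∃ i, 0 < y i := by
      by_contra h
      push_neg at h
      have : ∀ i, y i = 0 := fun i => le_antisymm (h i) (hy0 i)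
      simp [this] at hy1
    obtain ⟨i, hi⟩ := hex
    exact Finset.sum_pos' (fun j _ => hterm j)
      ⟨i, Finset.mem_univ i, mul_pos hi (Real.exp_pos _)⟩
  have hmw : ∀ i, mwuStep η u y i = y i * e i / Z := fun i => rfl
  -- membership
  have hmem : mwuStep η u y ∈ stdSimplex ℝ (Fin m) := by
    constructor
    · intro i
      rw [hmw]
      exact div_nonneg (hterm i) hZ.le
    · simp only [hmw, ← Finset.sum_div, ← hZdef]
      exact div_self hZ.ne'
  have hsum1 : ∑ i, mwuStep η u y i = 1 := hmem.2
  -- Chebyshev-type correlation inequality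
  have key : ∑ i, ∑ j, y i * y j * ((u i - u j) * (e i - e j)) ≤ 0 := by
    apply Finset.sum_nonpos
    intro i _
    apply Finset.sum_nonpos
    intro j _
    apply mul_nonpos_of_nonneg_of_nonpos (mul_nonneg (hy0 i) (hy0 j))
    rcases le_total (u i) (u j) with h | h
    · have hee : e j ≤ e i := Real.exp_le_exp.2 (by nlinarith)
      exact mul_nonpos_of_nonpos_of_nonneg (by linarith) (by linarith)
    · have hee : e i ≤ e j := Real.exp_le_exp.2 (by nlinarith)
      exact mul_nonpos_of_nonneg_of_nonpos (by linarith) (by linarith)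
  have expand : ∑ i, ∑ j, y i * y j * ((u i - u j) * (e i - e j)) =
      2 * (∑ i, u i * (y i * e i)) - 2 * (∑ i, u i * y i) * Z := by
    have h1 : ∀ i j : Fin m, y i * y j * ((u i - u j) * (e i - e j)) =
        (u i * (y i * e i)) * y j + y i * (u j * (y j * e j))
          - (u i * y i) * (y j * e j) - (y i * e i) * (u j * y j) := by
      intro i j; ring
    simp only [h1, Finset.sum_add_distrib, Finset.sum_sub_distrib, ← Finset.sum_mul, ← Finset.mul_sum]
    rw [hy1]
    ring
  have hCB : ∑ i, u i * (y i * e i) ≤ (∑ i, u i * y i) * Z := by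
    rw [expand] at key; linarith
  have ha : ∑ i, u i * mwuStep η u y i ≤ ∑ i, u i * y i := by
    have : ∑ i, u i * mwuStep η u y i = (∑ i, u i * (y i * e i)) / Z := by
      rw [Finset.sum_div]
      exact Finset.sum_congr rfl fun i _ => by rw [hmw]; ring
    rw [this, div_le_iff₀ hZ]
    exact hCB
  refine ⟨hmem, ha, ?_, by linarith⟩
  have hv : 2 * V - ∑ i, u i * mwuStep η u y i ≤ ∑ i, v i * mwuStep η u y i := by
    have h2 : ∑ i, (2 * V - u i) * mwuStep η u y i ≤ ∑ i, v i * mwuStep η u y i := by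
      apply Finset.sum_le_sum
      intro i _
      have := hV i
      exact mul_le_mul_of_nonneg_right (by linarith) (hmem.1 i)
    calc 2 * V - ∑ i, u i * mwuStep η u y i
        = ∑ i, (2 * V - u i) * mwuStep η u y i := by
          simp only [sub_mul, Finset.sum_sub_distrib, ← Finset.mul_sum, hsum1, mul_one]
      _ ≤ _ := h2
  linarith
end

section
/- Let G = (V, E) be a finite directed graph with no self-loops, V = {1, …, n}, n ≥ 2, and construct from G the optimizer/learner game (A, B) with Best Response learner and horizon T = n+1 as specified. If G contains a Hamiltonian cycle, then there exists a sequence of n+1 pure optimizer actions (edges) x(0), …, x(n) such that the optimizer's total reward against the Best Response learner equals n+1; concretely, if the Hamiltonian cycle visits vertices 1 = u_1 → u_2 → ⋯ → u_n → 1 via edges e_{p_1}, …, e_{p_n} and e_{p_{n+1}} = e_{p_1}, then the sequence e_{p_1}, …, e_{p_n}, e_{p_1} achieves reward 1 in every round, the learner responding with b_{u_1}, b_{u_2}, …, b_{u_n}, b_{u_1}. -/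
/-- The learner's actions: `toLex (Sum.inl j)` is `b_{j+1}` and `toLex (Sum.inr j)` is
`b'_{j+1}`; the lexicographic order puts `b_1, …, b_n` before `b'_1, …, b'_n`, matching
the tie-breaking order of the Best Response learner. -/
abbrev LAct (n : ℕ) := Fin n ⊕ₗ Fin n

instance (n : ℕ) : Fintype (LAct n) := inferInstanceAs (Fintype (Fin n ⊕ Fin n))

open scoped Classical in
/-- The Best Response learner's choice given cumulative utilities `h`: the action
maximizing `h`, ties broken in favor of the earliest action in the order
`(b_1, …, b_n, b'_1, …, b'_n)`. -/
noncomputable def brPlay {n : ℕ} (hn : 0 < n) (h : LAct n → ℝ) : LAct n :=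
  (Finset.univ.filter fun b => ∀ b', h b' ≤ h b).min' (by
    obtain ⟨b, -, hb⟩ := Finset.exists_max_image (Finset.univ : Finset (LAct n)) h
      ⟨toLex (Sum.inl ⟨0, hn⟩), Finset.mem_univ _⟩
    exact ⟨b, Finset.mem_filter.mpr ⟨Finset.mem_univ _, fun b' => hb b' (Finset.mem_univ _)⟩⟩)

/-- The optimizer's utility matrix of the game built from a directed graph with
vertices `Fin n` and edges `Fin m` (with source map `src`): `A[e, b_j] = 1` iff `e` is
outgoing from `j`, and `A[e, b'_j] = 0`. -/
noncomputable def Amat {n m : ℕ} (src : Fin m → Fin n) (e : Fin m) (b : LAct n) : ℝ :=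
  Sum.elim (fun j => if src e = j then 1 else 0) (fun _ => 0) (ofLex b)

/-- The learner's utility matrix of the game built from a directed graph (with source
map `src` and target map `tgt`; vertex `1` of the paper is index `0`):
`B[e, b_j] = −0.1` if `j = 1` and `e` is outgoing from `1`, `−4` if `j ≠ 1` and `e` is
outgoing from `j`, `1` if `e` is incoming to `j`, `0` otherwise; `B[e, b'_j] = 0.85`
iff `e` is outgoing from `j`. (An edge is never both outgoing from and incoming to the
same vertex since the graph has no self-loops.) -/
noncomputable def Bmat {n m : ℕ} (src tgt : Fin m → Fin n) (e : Fin m) (b : LAct n) : ℝ :=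
  Sum.elim
    (fun j => (if src e = j then (if (j : ℕ) = 0 then -0.1 else -4) else 0) +
      (if tgt e = j then 1 else 0))
    (fun j => if src e = j then 0.85 else 0) (ofLex b)

/-- The learner's cumulative utility vector after the optimizer's pure plays
`x 0, …, x (t−1)`. -/
noncomputable def histOf {n m : ℕ} (src tgt : Fin m → Fin n) (x : ℕ → Fin m) (t : ℕ)
    (b : LAct n) : ℝ :=
  ∑ s ∈ Finset.range t, Bmat src tgt (x s) b

/-- The Best Response learner's play at round `t` against the optimizer's pure
sequence `x`. -/
noncomputable def learnerPlay {n m : ℕ} (hn : 0 < n) (src tgt : Fin m → Fin n)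
    (x : ℕ → Fin m) (t : ℕ) : LAct n :=
  brPlay hn (histOf src tgt x t)

/-- The optimizer's total reward over `T` rounds against the Best Response learner. -/
noncomputable def totalReward {n m : ℕ} (hn : 0 < n) (src tgt : Fin m → Fin n)
    (x : ℕ → Fin m) (T : ℕ) : ℝ :=
  ∑ t ∈ Finset.range T, Amat src (x t) (learnerPlay hn src tgt x t)

lemma brPlay_eq_of_forall_lt {n : ℕ} (hn : 0 < n) (h : LAct n → ℝ) (b₀ : LAct n)
    (hb : ∀ b, b ≠ b₀ → h b < h b₀) : brPlay hn h = b₀ := by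
  classical
  unfold brPlay
  apply le_antisymm
  · apply Finset.min'_le
    simp only [Finset.mem_filter, Finset.mem_univ, true_and]
    intro b'
    rcases eq_or_ne b' b₀ with rfl | hne
    · exact le_rfl
    · exact (hb b' hne).le
  · apply Finset.le_min'
    intro y hy
    simp only [Finset.mem_filter, Finset.mem_univ, true_and] at hy
    have : y = b₀ := by
      by_contra hne
      exact absurd (hy b₀) (not_le.mpr (hb y hne))
    exact this.ge

lemma brPlay_zero {n : ℕ} (hn : 0 < n) (h : LAct n → ℝ) (hc : ∀ b, h b = 0) :
    brPlay hn h = toLex (Sum.inl ⟨0, hn⟩) := by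
  classical
  unfold brPlay
  apply le_antisymm
  · apply Finset.min'_le
    simp [hc]
  · apply Finset.le_min'
    intro y hy
    rcases y with j | j
    · exact Sum.Lex.inl_le_inl_iff.mpr (by exact Fin.mk_le_of_le_val (Nat.zero_le _))
    · exact Sum.Lex.inl_le_inr _ _

lemma sum_indic_eq {n : ℕ} (v : ℕ → Fin n)
    (hinj : ∀ s < n, ∀ t < n, v s = v t → s = t)
    (c : ℝ) (k t : ℕ) (hk : k < n) (ht : t ≤ n) :
    ∑ s ∈ Finset.range t, (if v s = v k then c else 0) = if k < t then c else 0 := by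
  have : ∀ s ∈ Finset.range t, (if v s = v k then c else 0) = if s = k then c else 0 := by
    intro s hs
    have hs' := Finset.mem_range.mp hs
    congr 1
    simp only [eq_iff_iff]
    exact ⟨fun h => hinj s (by omega) k hk h, fun h => by rw [h]⟩
  rw [Finset.sum_congr rfl this, Finset.sum_ite_eq' (Finset.range t) k fun _ => c]
  simp [Finset.mem_range]

lemma sum_in_lt {n : ℕ} (v : ℕ → Fin n)
    (hinj : ∀ s < n, ∀ t < n, v s = v t → s = t)
    (k t : ℕ) (hk : k < n) (ht : t < n) :
    ∑ s ∈ Finset.range t, (if v (s + 1) = v k then (1:ℝ) else 0)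
      = if 1 ≤ k ∧ k ≤ t then 1 else 0 := by
  have : ∀ s ∈ Finset.range t, (if v (s+1) = v k then (1:ℝ) else 0)
      = if s + 1 = k then 1 else 0 := by
    intro s hs
    have hs' := Finset.mem_range.mp hs
    congr 1
    simp only [eq_iff_iff]
    exact ⟨fun h => hinj (s+1) (by omega) k hk h, fun h => by rw [h]⟩
  rw [Finset.sum_congr rfl this]
  rcases k with _ | k'
  · simp
  · have : ∀ s ∈ Finset.range t, (if s + 1 = k' + 1 then (1:ℝ) else 0)
        = if s = k' then 1 else 0 := by
      intro s _; congr 1; simp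
    rw [Finset.sum_congr rfl this, Finset.sum_ite_eq' (Finset.range t) k' fun _ => (1:ℝ)]
    simp only [Finset.mem_range]
    congr 1
    simp only [eq_iff_iff]
    omega

/-- if the graph (no self-loops, `n ≥ 2` vertices, edges `e` given by
`src`/`tgt`) has a Hamiltonian cycle `1 = v 0 → v 1 → ⋯ → v (n−1) → v n = v 0` using
edges `p 0, …, p (n−1)`, then the optimizer's sequence `p 0, …, p (n−1), p 0` over the
`T = n+1` rounds earns reward `1` in every round — the learner responding with
`b_{v 0}, b_{v 1}, …, b_{v (n−1)}, b_{v 0}` — for a total reward of `n + 1`. -/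
theorem stmt15 {n m : ℕ} (hn : 2 ≤ n) (src tgt : Fin m → Fin n)
    (noloop : ∀ e, src e ≠ tgt e)
    (v : ℕ → Fin n) (p : ℕ → Fin m)
    (hv0 : v 0 = ⟨0, by omega⟩)
    (hsrc : ∀ t < n, src (p t) = v t)
    (htgt : ∀ t < n, tgt (p t) = v (t + 1))
    (hclose : v n = v 0)
    (hinj : ∀ s < n, ∀ t < n, v s = v t → s = t) :
    ∃ x : ℕ → Fin m,
      (∀ t < n, x t = p t) ∧ x n = p 0 ∧
      (∀ t ≤ n, learnerPlay (show 0 < n by omega) src tgt x t =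
        toLex (Sum.inl (v (t % n)))) ∧
      (∀ t ≤ n, Amat src (x t) (learnerPlay (show 0 < n by omega) src tgt x t) = 1) ∧
      totalReward (show 0 < n by omega) src tgt x (n + 1) = n + 1 := by
  have hpos : 0 < n := by omega
  set x : ℕ → Fin m := fun t => p (t % n) with hx
  have hsurj : ∀ j : Fin n, ∃ k, k < n ∧ v k = j := by
    have hVinj : Function.Injective (fun k : Fin n => v k) := by
      intro a b hab
      exact Fin.ext (hinj a a.2 b b.2 hab)
    have hVsurj := Finite.surjective_of_injective hVinj
    intro j
    obtain ⟨k, hk⟩ := hVsurj j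
    exact ⟨k.1, k.2, hk⟩
  have hk0 : ∀ k, k < n → ((v k : ℕ) = 0 ↔ k = 0) := by
    intro k hk
    constructor
    · intro h
      have : v k = v 0 := by rw [hv0]; exact Fin.ext h
      exact hinj k hk 0 hpos this
    · rintro rfl; rw [hv0]
  have hist_eq : ∀ t, t ≤ n → ∀ b, histOf src tgt x t b
      = ∑ s ∈ Finset.range t, Bmat src tgt (p s) b := by
    intro t ht b
    unfold histOf
    refine Finset.sum_congr rfl fun s hs => ?_
    have hs' := Finset.mem_range.mp hs
    simp only [hx, Nat.mod_eq_of_lt (by omega : s < n)]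
  have hval_inl : ∀ t, t ≤ n → ∀ k, k < n →
      histOf src tgt x t (toLex (Sum.inl (v k))) =
        (if k < t then (if k = 0 then (-0.1:ℝ) else -4) else 0)
        + (if 1 ≤ k ∧ k ≤ t then 1 else 0)
        + (if t = n ∧ k = 0 then 1 else 0) := by
    intro t ht k hk
    rw [hist_eq t ht]
    have hB : ∀ s ∈ Finset.range t, Bmat src tgt (p s) (toLex (Sum.inl (v k)))
        = (if v s = v k then (if k = 0 then (-0.1:ℝ) else -4) else 0)
          + (if v (s+1) = v k then (1:ℝ) else 0) := by
      intro s hs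
      have hs' := Finset.mem_range.mp hs
      have h1 : src (p s) = v s := hsrc s (by omega)
      have h2 : tgt (p s) = v (s+1) := htgt s (by omega)
      simp only [Bmat, ofLex_toLex, Sum.elim_inl, h1, h2, hk0 k hk]
    have hS2 : ∑ s ∈ Finset.range t, (if v (s+1) = v k then (1:ℝ) else 0)
        = (if 1 ≤ k ∧ k ≤ t then (1:ℝ) else 0) + (if t = n ∧ k = 0 then 1 else 0) := by
      rcases Nat.lt_or_ge t n with htn | htn
      · rw [sum_in_lt v hinj k t hk htn, if_neg (by omega : ¬(t = n ∧ k = 0)), add_zero]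
      · have htn' : t = n := by omega
        rw [htn']
        have hn1 : n - 1 + 1 = n := by omega
        have hsplit := Finset.sum_range_succ
          (fun s => if v (s+1) = v k then (1:ℝ) else 0) (n-1)
        rw [hn1] at hsplit
        rw [hsplit, sum_in_lt v hinj k (n-1) hk (by omega), hclose]
        have h0 : (if v 0 = v k then (1:ℝ) else 0) = if k = 0 then 1 else 0 := by
          congr 1
          simp only [eq_iff_iff]
          exact ⟨fun h => (hinj k hk 0 hpos h.symm), fun h => by rw [h]⟩
        rw [h0]
        have e1 : (1 ≤ k ∧ k ≤ n - 1) ↔ (1 ≤ k ∧ k ≤ n) := by omega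
        have e2 : (n = n ∧ k = 0) ↔ (k = 0) := ⟨fun h => h.2, fun h => ⟨rfl, h⟩⟩
        simp only [e1, e2, true_and]
    rw [Finset.sum_congr rfl hB, Finset.sum_add_distrib,
      sum_indic_eq v hinj _ k t hk ht, hS2]
    ring
  have hval_inr : ∀ t, t ≤ n → ∀ k, k < n →
      histOf src tgt x t (toLex (Sum.inr (v k))) = if k < t then (0.85:ℝ) else 0 := by
    intro t ht k hk
    rw [hist_eq t ht]
    have hB : ∀ s ∈ Finset.range t, Bmat src tgt (p s) (toLex (Sum.inr (v k)))
        = (if v s = v k then (0.85:ℝ) else 0) := by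
      intro s hs
      have hs' := Finset.mem_range.mp hs
      have h1 : src (p s) = v s := hsrc s (by omega)
      simp only [Bmat, ofLex_toLex, Sum.elim_inr, h1]
    rw [Finset.sum_congr rfl hB, sum_indic_eq v hinj _ k t hk ht]
  have hlearn : ∀ t, t ≤ n → learnerPlay hpos src tgt x t = toLex (Sum.inl (v (t % n))) := by
    intro t ht
    unfold learnerPlay
    rcases Nat.eq_zero_or_pos t with rfl | htpos
    · rw [Nat.zero_mod, hv0]
      exact brPlay_zero hpos _ (fun b => by simp [histOf])
    rcases Nat.lt_or_ge t n with htn | hge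
    · rw [Nat.mod_eq_of_lt htn]
      apply brPlay_eq_of_forall_lt
      intro b hb
      have hb0 : histOf src tgt x t (toLex (Sum.inl (v t))) = 1 := by
        rw [hval_inl t ht t htn, if_neg (lt_irrefl t), if_pos ⟨htpos, le_refl t⟩,
          if_neg (by omega : ¬(t = n ∧ t = 0))]
        norm_num
      rw [hb0]
      rcases b with j | j
      · obtain ⟨k, hkn, rfl⟩ := hsurj j
        have hkt : k ≠ t := fun h => hb (by rw [h]; rfl)
        rw [show (Sum.inl (v k) : LAct n) = toLex (Sum.inl (v k)) from rfl,
          hval_inl t ht k hkn]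
        split_ifs <;> first | omega | norm_num
      · obtain ⟨k, hkn, rfl⟩ := hsurj j
        rw [show (Sum.inr (v k) : LAct n) = toLex (Sum.inr (v k)) from rfl,
          hval_inr t ht k hkn]
        split_ifs <;> norm_num
    · have htn : t = n := by omega
      rw [htn, Nat.mod_self]
      apply brPlay_eq_of_forall_lt
      intro b hb
      have hb0 : histOf src tgt x n (toLex (Sum.inl (v 0))) = 0.9 := by
        rw [hval_inl n le_rfl 0 hpos]
        split_ifs <;> first | omega | norm_num
      rw [hb0]
      rcases b with j | j
      · obtain ⟨k, hkn, rfl⟩ := hsurj j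
        have hkt : k ≠ 0 := fun h => hb (by rw [h]; rfl)
        rw [show (Sum.inl (v k) : LAct n) = toLex (Sum.inl (v k)) from rfl,
          hval_inl n le_rfl k hkn]
        split_ifs <;> first | omega | norm_num
      · obtain ⟨k, hkn, rfl⟩ := hsurj j
        rw [show (Sum.inr (v k) : LAct n) = toLex (Sum.inr (v k)) from rfl,
          hval_inr n le_rfl k hkn]
        split_ifs <;> norm_num
  have hA : ∀ t, t ≤ n → Amat src (x t) (learnerPlay hpos src tgt x t) = 1 := by
    intro t ht
    rw [hlearn t ht]
    have hsx : src (x t) = v (t % n) := by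
      have hxt : x t = p (t % n) := rfl
      rw [hxt, hsrc _ (Nat.mod_lt _ hpos)]
    simp [Amat, hsx]
  refine ⟨x, fun t ht => by show p (t % n) = p t; rw [Nat.mod_eq_of_lt ht],
    by show p (n % n) = p 0; rw [Nat.mod_self], hlearn, hA, ?_⟩
  show totalReward hpos src tgt x (n + 1) = (n : ℝ) + 1
  unfold totalReward
  trans ∑ _t ∈ Finset.range (n + 1), (1 : ℝ)
  · exact Finset.sum_congr rfl fun t ht => hA t (Nat.lt_succ_iff.mp (Finset.mem_range.mp ht))
  · rw [Finset.sum_const, Finset.card_range, nsmul_eq_mul, mul_one]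
    push_cast
    ring
end
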